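/- arXiv:1403.5095 — 14 statements merged into one kernel-verified Lean document; each statement's English description precedes it below -/
import Mathlib

section
/- If (G, δ, ε) is a weak comonad on a category A (i.e., δ: G → GG is coassociative, ε: G → I_A satisfies ε = ε·Gε·δ, δ = GεG·Gδ·δ, and Gε·δ = εG·δ), then the natural transformation γ := Gε·δ : G → G is idempotent. -/
open CategoryTheory

universe v u

/-- For a weak comonad `(G, δ, ε)`, the natural transformation
`γ := Gε·δ : G ⟶ G` is idempotent (stated componentwise). -/
theorem weak_comonad_gamma_idempotent
    {A : Type u} [Category.{v} A] (G : A ⥤ A)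
    (δ : G ⟶ G ⋙ G) (ε : G ⟶ 𝟭 A)
    (coassoc : ∀ X : A, δ.app X ≫ G.map (δ.app X) = δ.app X ≫ δ.app (G.obj X))
    (w1 : ∀ X : A, δ.app X ≫ G.map (ε.app X) ≫ ε.app X = ε.app X)
    (w2 : ∀ X : A, δ.app X ≫ G.map (δ.app X) ≫ G.map (ε.app (G.obj X)) = δ.app X)
    (w3 : ∀ X : A, δ.app X ≫ G.map (ε.app X) = δ.app X ≫ ε.app (G.obj X)) :
    ∀ X : A, (δ.app X ≫ G.map (ε.app X)) ≫ (δ.app X ≫ G.map (ε.app X))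
      = δ.app X ≫ G.map (ε.app X) := by
  intro X
  have nat : G.map (ε.app X) ≫ δ.app X
      = δ.app (G.obj X) ≫ G.map (G.map (ε.app X)) := δ.naturality (ε.app X)
  calc (δ.app X ≫ G.map (ε.app X)) ≫ δ.app X ≫ G.map (ε.app X)
      = δ.app X ≫ (G.map (ε.app X) ≫ δ.app X) ≫ G.map (ε.app X) := by
        simp [Category.assoc]
    _ = δ.app X ≫ δ.app (G.obj X) ≫ G.map (G.map (ε.app X)) ≫ G.map (ε.app X) := by
        rw [nat]; simp only [Category.assoc]
    _ = δ.app X ≫ G.map (δ.app X) ≫ G.map (G.map (ε.app X)) ≫ G.map (ε.app X) := by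
        rw [reassoc_of% (coassoc X).symm]
    _ = δ.app X ≫ G.map (δ.app X ≫ G.map (ε.app X) ≫ ε.app X) := by
        simp only [Functor.map_comp, Category.assoc]
    _ = δ.app X ≫ G.map (ε.app X) := by rw [w1]
end

section
/- Let (G, δ, ε) be a weak comonad on A and suppose the idempotent γ := Gε·δ splits as G →p underline{G} →i G with p·i = id. Then underline{G} carries a (proper, counital) comonad structure with coproduct underline{δ} := pp·δ·i and counit underline{ε} := ε·i. -/
open CategoryTheory

universe v u

section

variable {A : Type u} [Category.{v} A]

/-- The induced coproduct `underline δ := pp·δ·i` on the splitting functor. -/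
def splitCoprod (G G' : A ⥤ A) (δ : G ⟶ G ⋙ G) (p : G ⟶ G') (i : G' ⟶ G) (X : A) :
    G'.obj X ⟶ G'.obj (G'.obj X) :=
  i.app X ≫ δ.app X ≫ G.map (p.app X) ≫ p.app (G'.obj X)

/-- The induced counit `underline ε := ε·i` on the splitting functor. -/
def splitCounit (G G' : A ⥤ A) (ε : G ⟶ 𝟭 A) (i : G' ⟶ G) (X : A) :
    G'.obj X ⟶ X :=
  i.app X ≫ ε.app X

/-- If `(G, δ, ε)` is a weak comonad and the idempotent `γ = Gε·δ`
splits as `G →p G' →i G` with `i·p = γ` and `p·i = id`, then `G'` is a proper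
(counital) comonad with coproduct `pp·δ·i` and counit `ε·i`. -/
theorem split_weak_comonad_is_comonad
    (G : A ⥤ A) (δ : G ⟶ G ⋙ G) (ε : G ⟶ 𝟭 A)
    (coassoc : ∀ X : A, δ.app X ≫ G.map (δ.app X) = δ.app X ≫ δ.app (G.obj X))
    (w1 : ∀ X : A, δ.app X ≫ G.map (ε.app X) ≫ ε.app X = ε.app X)
    (w2 : ∀ X : A, δ.app X ≫ G.map (δ.app X) ≫ G.map (ε.app (G.obj X)) = δ.app X)
    (w3 : ∀ X : A, δ.app X ≫ G.map (ε.app X) = δ.app X ≫ ε.app (G.obj X))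
    (G' : A ⥤ A) (p : G ⟶ G') (i : G' ⟶ G)
    (split₁ : ∀ X : A, p.app X ≫ i.app X = δ.app X ≫ G.map (ε.app X))
    (split₂ : ∀ X : A, i.app X ≫ p.app X = 𝟙 (G'.obj X)) :
    (∀ X : A, splitCoprod G G' δ p i X ≫ G'.map (splitCoprod G G' δ p i X)
        = splitCoprod G G' δ p i X ≫ splitCoprod G G' δ p i (G'.obj X)) ∧
    (∀ X : A, splitCoprod G G' δ p i X ≫ G'.map (splitCounit G G' ε i X) = 𝟙 (G'.obj X)) ∧
    (∀ X : A, splitCoprod G G' δ p i X ≫ splitCounit G G' ε i (G'.obj X) = 𝟙 (G'.obj X)) := by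
  -- δ ≫ G γ = δ
  have dGg : ∀ X : A, δ.app X ≫ G.map (δ.app X ≫ G.map (ε.app X)) = δ.app X := by
    intro X
    rw [w3 X, G.map_comp, ← Category.assoc, Category.assoc]
    exact w2 X
  -- γ ≫ δ = δ
  have gd : ∀ X : A, (δ.app X ≫ G.map (ε.app X)) ≫ δ.app X = δ.app X := by
    intro X
    have hnat := δ.naturality (ε.app X)
    simp only [Functor.id_obj, Functor.comp_map] at hnat
    rw [Category.assoc, hnat, ← reassoc_of% (coassoc X), ← G.map_comp]
    exact dGg X
  refine ⟨?_, ?_, ?_⟩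
  · intro X
    simp only [splitCoprod, Category.assoc]
    calc i.app X ≫ δ.app X ≫ G.map (p.app X) ≫ p.app (G'.obj X) ≫
          G'.map (i.app X ≫ δ.app X ≫ G.map (p.app X) ≫ p.app (G'.obj X))
        = i.app X ≫ δ.app X ≫ G.map (p.app X) ≫
            G.map (i.app X ≫ δ.app X ≫ G.map (p.app X) ≫ p.app (G'.obj X)) ≫
            p.app (G'.obj (G'.obj X)) := by
          rw [← p.naturality]
      _ = i.app X ≫ ((δ.app X ≫ G.map (p.app X ≫ i.app X)) ≫ G.map (δ.app X)) ≫
            G.map (G.map (p.app X)) ≫ G.map (p.app (G'.obj X)) ≫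
            p.app (G'.obj (G'.obj X)) := by
          simp only [Functor.map_comp, Category.assoc]
      _ = i.app X ≫ (δ.app X ≫ G.map (δ.app X)) ≫
            G.map (G.map (p.app X)) ≫ G.map (p.app (G'.obj X)) ≫
            p.app (G'.obj (G'.obj X)) := by
          rw [split₁ X, dGg X]
      _ = i.app X ≫ (δ.app X ≫ δ.app (G.obj X)) ≫
            G.map (G.map (p.app X)) ≫ G.map (p.app (G'.obj X)) ≫
            p.app (G'.obj (G'.obj X)) := by rw [coassoc X]
      _ = i.app X ≫ δ.app X ≫ (G.map (p.app X) ≫ δ.app (G'.obj X)) ≫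
            G.map (p.app (G'.obj X)) ≫ p.app (G'.obj (G'.obj X)) := by
          have hnat := δ.naturality (p.app X)
          simp only [Functor.comp_map] at hnat
          rw [hnat]; simp
      _ = i.app X ≫ δ.app X ≫ G.map (p.app X) ≫
            ((p.app (G'.obj X) ≫ i.app (G'.obj X)) ≫ δ.app (G'.obj X)) ≫
            G.map (p.app (G'.obj X)) ≫ p.app (G'.obj (G'.obj X)) := by
          rw [split₁ (G'.obj X), gd (G'.obj X)]
          simp
      _ = i.app X ≫ δ.app X ≫ G.map (p.app X) ≫ p.app (G'.obj X) ≫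
          i.app (G'.obj X) ≫ δ.app (G'.obj X) ≫
            G.map (p.app (G'.obj X)) ≫ p.app (G'.obj (G'.obj X)) := by simp
  · intro X
    simp only [splitCoprod, splitCounit, Category.assoc]
    calc i.app X ≫ δ.app X ≫ G.map (p.app X) ≫ p.app (G'.obj X) ≫
          G'.map (i.app X ≫ ε.app X)
        = i.app X ≫ δ.app X ≫ G.map (p.app X) ≫
            G.map (i.app X ≫ ε.app X) ≫ p.app X := by
          rw [← p.naturality]
          simp
      _ = i.app X ≫ (δ.app X ≫ G.map (p.app X ≫ i.app X) ≫ G.map (ε.app X)) ≫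
            p.app X := by simp only [Functor.map_comp, Category.assoc]
      _ = i.app X ≫ (δ.app X ≫ G.map (ε.app X)) ≫ p.app X := by
          rw [split₁ X, reassoc_of% (dGg X)]
      _ = 𝟙 (G'.obj X) := by
          rw [← split₁ X]
          simp [split₂ X]
  · intro X
    simp only [splitCoprod, splitCounit, Category.assoc]
    calc i.app X ≫ δ.app X ≫ G.map (p.app X) ≫ p.app (G'.obj X) ≫
          i.app (G'.obj X) ≫ ε.app (G'.obj X)
        = i.app X ≫ δ.app X ≫ G.map (p.app X) ≫
            (δ.app (G'.obj X) ≫ G.map (ε.app (G'.obj X))) ≫ ε.app (G'.obj X) := by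
          rw [reassoc_of% (split₁ (G'.obj X))]
          simp
      _ = i.app X ≫ δ.app X ≫ G.map (p.app X) ≫ ε.app (G'.obj X) := by
          rw [Category.assoc, w1 (G'.obj X)]
      _ = i.app X ≫ δ.app X ≫ ε.app (G.obj X) ≫ p.app X := by
          have hnat := ε.naturality (p.app X)
          simp only [Functor.id_map] at hnat
          rw [hnat]
      _ = i.app X ≫ (δ.app X ≫ G.map (ε.app X)) ≫ p.app X := by
          rw [← Category.assoc (δ.app X), ← w3 X]
      _ = 𝟙 (G'.obj X) := by rw [← split₁ X]; simp [split₂ X]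

end
end

section
/- Let (F, m, η) be a weak monad on A and suppose the idempotent ϑ := m·Fη splits as F →p underline{F} →i F with p·i = id. Then underline{F} carries a (proper, unital) monad structure with product underline{m} := p·m·ii and unit underline{η} := p·η. -/
open CategoryTheory

universe v u

section

variable {A : Type u} [Category.{v} A]

/-- The induced product `underline m := p·m·ii` on the splitting functor. -/
def splitProd (F F' : A ⥤ A) (m : F ⋙ F ⟶ F) (p : F ⟶ F') (i : F' ⟶ F) (X : A) :
    F'.obj (F'.obj X) ⟶ F'.obj X :=
  i.app (F'.obj X) ≫ F.map (i.app X) ≫ m.app X ≫ p.app X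

/-- The induced unit `underline η := p·η` on the splitting functor. -/
def splitUnit (F F' : A ⥤ A) (η : 𝟭 A ⟶ F) (p : F ⟶ F') (X : A) :
    X ⟶ F'.obj X :=
  η.app X ≫ p.app X

/-- If `(F, m, η)` is a weak monad and the idempotent `ϑ = m·Fη`
splits as `F →p F' →i F` with `i·p = ϑ` and `p·i = id`, then `F'` is a proper
(unital) monad with product `p·m·ii` and unit `p·η`. -/
theorem split_weak_monad_is_monad
    (F : A ⥤ A) (m : F ⋙ F ⟶ F) (η : 𝟭 A ⟶ F)
    (assoc : ∀ X : A, F.map (m.app X) ≫ m.app X = m.app (F.obj X) ≫ m.app X)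
    (w1 : ∀ X : A, η.app X ≫ F.map (η.app X) ≫ m.app X = η.app X)
    (w2 : ∀ X : A, F.map (η.app (F.obj X)) ≫ m.app (F.obj X) ≫ m.app X = m.app X)
    (w3 : ∀ X : A, F.map (η.app X) ≫ m.app X = η.app (F.obj X) ≫ m.app X)
    (F' : A ⥤ A) (p : F ⟶ F') (i : F' ⟶ F)
    (split₁ : ∀ X : A, p.app X ≫ i.app X = F.map (η.app X) ≫ m.app X)
    (split₂ : ∀ X : A, i.app X ≫ p.app X = 𝟙 (F'.obj X)) :
    (∀ X : A, F'.map (splitProd F F' m p i X) ≫ splitProd F F' m p i X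
        = splitProd F F' m p i (F'.obj X) ≫ splitProd F F' m p i X) ∧
    (∀ X : A, F'.map (splitUnit F F' η p X) ≫ splitProd F F' m p i X = 𝟙 (F'.obj X)) ∧
    (∀ X : A, splitUnit F F' η p (F'.obj X) ≫ splitProd F F' m p i X = 𝟙 (F'.obj X)) := by
  -- F(θ) ≫ m = m
  have hFθ : ∀ X : A, F.map (F.map (η.app X) ≫ m.app X) ≫ m.app X = m.app X := by
    intro X
    rw [w3 X, F.map_comp, Category.assoc, assoc X]
    exact w2 X
  -- m ≫ θ = m
  have hmθ : ∀ X : A, m.app X ≫ F.map (η.app X) ≫ m.app X = m.app X := by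
    intro X
    have hnat : F.map (F.map (η.app X)) ≫ m.app (F.obj X) = m.app X ≫ F.map (η.app X) :=
      m.naturality (η.app X)
    slice_lhs 1 2 => rw [← hnat]
    slice_lhs 2 3 => rw [← assoc X]
    slice_lhs 1 2 => rw [← F.map_comp]
    exact hFθ X
  -- i ≫ θ ≫ p = 1
  have key : ∀ X : A, i.app X ≫ F.map (η.app X) ≫ m.app X ≫ p.app X = 𝟙 (F'.obj X) := by
    intro X
    slice_lhs 2 3 => rw [← split₁ X]
    slice_lhs 1 2 => rw [split₂ X]
    rw [Category.id_comp, split₂ X]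
  refine ⟨?_, ?_, ?_⟩
  · intro X
    simp only [splitProd, Functor.map_comp, Category.assoc]
    have hnat : F.map (F.map (i.app X)) ≫ m.app (F.obj X)
        = m.app (F'.obj X) ≫ F.map (i.app X) := m.naturality (i.app X)
    -- LHS
    slice_lhs 4 5 => rw [i.naturality (p.app X)]
    slice_lhs 3 4 => rw [i.naturality (m.app X)]
    have hni : F'.map (F.map (i.app X)) ≫ i.app ((F ⋙ F).obj X)
        = i.app (F.obj (F'.obj X)) ≫ F.map (F.map (i.app X)) := i.naturality (F.map (i.app X))
    slice_lhs 2 3 => rw [hni]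
    slice_lhs 1 2 => rw [i.naturality (i.app (F'.obj X))]
    slice_lhs 5 6 => rw [← F.map_comp, split₁ X]
    slice_lhs 5 6 => rw [hFθ X]
    slice_lhs 4 5 => rw [assoc X]
    slice_lhs 3 4 => rw [hnat]
    -- RHS
    slice_rhs 4 5 => rw [split₁ (F'.obj X)]
    slice_rhs 3 5 => rw [hmθ (F'.obj X)]
  · intro X
    simp only [splitProd, splitUnit, Functor.map_comp, Category.assoc]
    slice_lhs 2 3 => rw [i.naturality (p.app X)]
    slice_lhs 1 2 => rw [i.naturality (η.app X)]
    slice_lhs 3 4 => rw [← F.map_comp, split₁ X]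
    slice_lhs 3 4 => rw [hFθ X]
    exact key X
  · intro X
    simp only [splitProd, splitUnit, Category.assoc]
    slice_lhs 2 3 => rw [split₁ (F'.obj X)]
    slice_lhs 1 3 => rw [w1 (F'.obj X)]
    slice_lhs 1 2 => rw [← η.naturality (i.app X)]
    slice_lhs 2 3 => rw [← w3 X]
    simpa using key X

end
end

section
/- Let (L, R, α, β) be a regular pairing of functors L: A → B, R: B → A (so α·β·α = α and β·α·β = β). Then the induced natural transformations ℓ := εL·Lη : L → L and r := Rε·ηR : R → R are idempotent, and ε = ε·ℓR = ε·Lr as well as η = Rℓ·η = rL·η. -/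
open CategoryTheory

universe v₁ u₁ v₂ u₂

section

variable {A : Type u₁} [Category.{v₁} A] {B : Type u₂} [Category.{v₂} B]
variable (L : A ⥤ B) (R : B ⥤ A)

/-- The map `α : Mor_B(L X, Y) → Mor_A(X, R Y)` of a pairing, determined by `η`. -/
def pairingAlpha (η : 𝟭 A ⟶ L ⋙ R) {X : A} {Y : B} (f : L.obj X ⟶ Y) : X ⟶ R.obj Y :=
  η.app X ≫ R.map f

/-- The map `β : Mor_A(X, R Y) → Mor_B(L X, Y)` of a pairing, determined by `ε`. -/
def pairingBeta (ε : R ⋙ L ⟶ 𝟭 B) {X : A} {Y : B} (g : X ⟶ R.obj Y) : L.obj X ⟶ Y :=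
  L.map g ≫ ε.app Y

/-- `ℓ := εL·Lη : L ⟶ L` (componentwise). -/
def pairingEll (η : 𝟭 A ⟶ L ⋙ R) (ε : R ⋙ L ⟶ 𝟭 B) (X : A) : L.obj X ⟶ L.obj X :=
  L.map (η.app X) ≫ ε.app (L.obj X)

/-- `r := Rε·ηR : R ⟶ R` (componentwise). -/
def pairingR (η : 𝟭 A ⟶ L ⋙ R) (ε : R ⋙ L ⟶ 𝟭 B) (Y : B) : R.obj Y ⟶ R.obj Y :=
  η.app (R.obj Y) ≫ R.map (ε.app Y)

/-- For a regular pairing `(L, R, α, β)` the induced `ℓ` and `r`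
are idempotent, and `ε = ε·ℓR = ε·Lr` as well as `η = Rℓ·η = rL·η`. -/
theorem regular_pairing_idempotents
    (η : 𝟭 A ⟶ L ⋙ R) (ε : R ⋙ L ⟶ 𝟭 B)
    (regα : ∀ (X : A) (Y : B) (f : L.obj X ⟶ Y),
      pairingAlpha L R η (pairingBeta L R ε (pairingAlpha L R η f)) = pairingAlpha L R η f)
    (regβ : ∀ (X : A) (Y : B) (g : X ⟶ R.obj Y),
      pairingBeta L R ε (pairingAlpha L R η (pairingBeta L R ε g)) = pairingBeta L R ε g) :
    (∀ X : A, pairingEll L R η ε X ≫ pairingEll L R η ε X = pairingEll L R η ε X) ∧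
    (∀ Y : B, pairingR L R η ε Y ≫ pairingR L R η ε Y = pairingR L R η ε Y) ∧
    (∀ Y : B, pairingEll L R η ε (R.obj Y) ≫ ε.app Y = ε.app Y) ∧
    (∀ Y : B, L.map (pairingR L R η ε Y) ≫ ε.app Y = ε.app Y) ∧
    (∀ X : A, η.app X ≫ R.map (pairingEll L R η ε X) = η.app X) ∧
    (∀ X : A, η.app X ≫ pairingR L R η ε (L.obj X) = η.app X) := by
  have hβα : ∀ (X : A) (Y : B) (f : L.obj X ⟶ Y),
      pairingBeta L R ε (pairingAlpha L R η f) = pairingEll L R η ε X ≫ f := by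
    intro X Y f
    have := ε.naturality f
    simp only [Functor.comp_map, Functor.id_map] at this
    simp [pairingBeta, pairingAlpha, pairingEll, this]
  have hαβ : ∀ (X : A) (Y : B) (g : X ⟶ R.obj Y),
      pairingAlpha L R η (pairingBeta L R ε g) = g ≫ pairingR L R η ε Y := by
    intro X Y g
    have := η.naturality g
    simp only [Functor.comp_map, Functor.id_map] at this
    simp only [pairingBeta, pairingAlpha, pairingR, Functor.map_comp, Category.assoc]
    rw [← Category.assoc, ← this, Category.assoc]
  refine ⟨?_, ?_, ?_, ?_, ?_, ?_⟩
  · intro X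
    have h := regβ X (L.obj X) (η.app X)
    rw [hβα] at h
    have hℓ : pairingBeta L R ε (η.app X) = pairingEll L R η ε X := rfl
    rwa [hℓ] at h
  · intro Y
    have h := regα (R.obj Y) Y (ε.app Y)
    rw [hαβ] at h
    have hr : pairingAlpha L R η (ε.app Y) = pairingR L R η ε Y := rfl
    rwa [hr] at h
  · intro Y
    have h := regβ (R.obj Y) Y (𝟙 (R.obj Y))
    rw [hβα] at h
    simpa [pairingBeta] using h
  · intro Y
    have h := regβ (R.obj Y) Y (𝟙 (R.obj Y))
    rw [hαβ] at h
    simpa [pairingBeta] using h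
  · intro X
    have h := regα X (L.obj X) (𝟙 (L.obj X))
    rw [hβα] at h
    simpa [pairingAlpha] using h
  · intro X
    have h := regα X (L.obj X) (𝟙 (L.obj X))
    rw [hαβ] at h
    simpa [pairingAlpha] using h

end
end

section
/- For functors L: A → B and R: B → A, the pair (L, R) admits a regular pairing (L, R, α, β) whose idempotents ℓ and r split if and only if there exist retractions underline{L} →i L →p underline{L} and underline{R} →i' R →p' underline{R} (p·i = id, p'·i' = id) such that (underline{L}, underline{R}) is an adjoint pair. -/
/-!
Since `β (α f) = ℓ ≫ f` and `α (β g) = g ≫ r`, regularity says exactly that `α f ≫ r = α f`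
and `ℓ ≫ β g = β g`. If `ℓ = pL ≫ iL` and `r = pR ≫ iR` split, then `f ↦ α (pL ≫ f) ≫ pR` and
`g ↦ iL ≫ β (g ≫ iR)` are therefore mutually inverse, natural bijections
`(L' X ⟶ Y) ≃ (X ⟶ R' Y)`. Conversely, from `L' ⊣ R'` put `η := unit ≫ iR L' ≫ R iL` and
`ε := L pR ≫ pL R' ≫ counit`; then `α` and `β` are the adjunction bijection and its inverse
sandwiched between the retractions, which gives `ℓ = pL ≫ iL`, `r = pR ≫ iR` and regularity.
-/

open CategoryTheory

universe v₁ u₁ v₂ u₂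

section

variable {A : Type u₁} [Category.{v₁} A] {B : Type u₂} [Category.{v₂} B]
variable (L : A ⥤ B) (R : B ⥤ A)

variable {L R} (η : 𝟭 A ⟶ L ⋙ R) (ε : R ⋙ L ⟶ 𝟭 B)

lemma pairingAlpha_comp {X : A} {Y Y' : B} (f : L.obj X ⟶ Y) (k : Y ⟶ Y') :
    pairingAlpha L R η (f ≫ k) = pairingAlpha L R η f ≫ R.map k := by
  simp [pairingAlpha]

lemma pairingAlpha_map_comp {X' X : A} {Y : B} (h : X' ⟶ X) (f : L.obj X ⟶ Y) :
    pairingAlpha L R η (L.map h ≫ f) = h ≫ pairingAlpha L R η f := by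
  simpa [pairingAlpha] using (η.naturality_assoc h (R.map f)).symm

lemma pairingBeta_comp {X' X : A} {Y : B} (h : X' ⟶ X) (g : X ⟶ R.obj Y) :
    pairingBeta L R ε (h ≫ g) = L.map h ≫ pairingBeta L R ε g := by
  simp [pairingBeta]

lemma pairingBeta_comp_map {X : A} {Y Y' : B} (g : X ⟶ R.obj Y) (k : Y ⟶ Y') :
    pairingBeta L R ε (g ≫ R.map k) = pairingBeta L R ε g ≫ k := by
  simpa [pairingBeta] using L.map g ≫= ε.naturality k

lemma pairingBeta_pairingAlpha {X : A} {Y : B} (f : L.obj X ⟶ Y) :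
    pairingBeta L R ε (pairingAlpha L R η f) = pairingEll L R η ε X ≫ f := by
  rw [pairingAlpha, pairingBeta_comp, ← Category.id_comp (R.map f), pairingBeta_comp_map]
  simp [pairingEll, pairingBeta]

lemma pairingAlpha_pairingBeta {X : A} {Y : B} (g : X ⟶ R.obj Y) :
    pairingAlpha L R η (pairingBeta L R ε g) = g ≫ pairingR L R η ε Y := by
  rw [pairingBeta, pairingAlpha_map_comp, ← Category.comp_id (ε.app Y), pairingAlpha_comp]
  simp [pairingR, pairingAlpha]

lemma pairingAlpha_comp_pairingR_of_regular
    (hα : ∀ (X : A) (Y : B) (f : L.obj X ⟶ Y),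
      pairingAlpha L R η (pairingBeta L R ε (pairingAlpha L R η f)) = pairingAlpha L R η f)
    {X : A} {Y : B} (f : L.obj X ⟶ Y) :
    pairingAlpha L R η f ≫ pairingR L R η ε Y = pairingAlpha L R η f := by
  rw [← pairingAlpha_pairingBeta, hα]

lemma pairingEll_comp_pairingBeta_of_regular
    (hβ : ∀ (X : A) (Y : B) (g : X ⟶ R.obj Y),
      pairingBeta L R ε (pairingAlpha L R η (pairingBeta L R ε g)) = pairingBeta L R ε g)
    {X : A} {Y : B} (g : X ⟶ R.obj Y) :
    pairingEll L R η ε X ≫ pairingBeta L R ε g = pairingBeta L R ε g := by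
  rw [← pairingBeta_pairingAlpha, hβ]

def adjunctionOfSplitRegularPairing
    (hα : ∀ (X : A) (Y : B) (f : L.obj X ⟶ Y),
      pairingAlpha L R η (pairingBeta L R ε (pairingAlpha L R η f)) = pairingAlpha L R η f)
    (hβ : ∀ (X : A) (Y : B) (g : X ⟶ R.obj Y),
      pairingBeta L R ε (pairingAlpha L R η (pairingBeta L R ε g)) = pairingBeta L R ε g)
    {L' : A ⥤ B} (pL : L ⟶ L') (iL : L' ⟶ L)
    (hℓ : ∀ X : A, pL.app X ≫ iL.app X = pairingEll L R η ε X)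
    (hiL : ∀ X : A, iL.app X ≫ pL.app X = 𝟙 (L'.obj X))
    {R' : B ⥤ A} (pR : R ⟶ R') (iR : R' ⟶ R)
    (hr : ∀ Y : B, pR.app Y ≫ iR.app Y = pairingR L R η ε Y)
    (hiR : ∀ Y : B, iR.app Y ≫ pR.app Y = 𝟙 (R'.obj Y)) :
    L' ⊣ R' :=
  Adjunction.mkOfHomEquiv
    { homEquiv := fun X Y =>
        { toFun := fun f => pairingAlpha L R η (pL.app X ≫ f) ≫ pR.app Y
          invFun := fun g => iL.app X ≫ pairingBeta L R ε (g ≫ iR.app Y)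
          left_inv := fun f => by
            simp only [Category.assoc, hr, pairingAlpha_comp_pairingR_of_regular η ε hα,
              pairingBeta_pairingAlpha, ← hℓ, reassoc_of% hiL]
          right_inv := fun g => by
            simp only [← Category.assoc (pL.app X), hℓ,
              pairingEll_comp_pairingBeta_of_regular η ε hβ, pairingAlpha_pairingBeta,
              ← hr, Category.assoc, reassoc_of% hiR, hiR, Category.comp_id] }
      homEquiv_naturality_left_symm := fun f g => by
        simp only [Equiv.coe_fn_symm_mk, pairingBeta_comp, iL.naturality_assoc, L.map_comp,
          Category.assoc]
      homEquiv_naturality_right := fun f g => by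
        simp only [Equiv.coe_fn_mk, pairingAlpha_comp, Category.assoc, pR.naturality,
          R'.map_comp] }

section retract

variable {L' : A ⥤ B} {R' : B ⥤ A} (adj : L' ⊣ R')
  (iL : L' ⟶ L) (pL : L ⟶ L') (iR : R' ⟶ R) (pR : R ⟶ R')

def retractUnit : 𝟭 A ⟶ L ⋙ R :=
  adj.unit ≫ Functor.whiskerLeft L' iR ≫ Functor.whiskerRight iL R

def retractCounit : R ⋙ L ⟶ 𝟭 B :=
  Functor.whiskerRight pR L ≫ Functor.whiskerLeft R' pL ≫ adj.counit

lemma pairingAlpha_retractUnit {X : A} {Y : B} (f : L.obj X ⟶ Y) :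
    pairingAlpha L R (retractUnit adj iL iR) f = adj.homEquiv X Y (iL.app X ≫ f) ≫ iR.app Y := by
  simp [pairingAlpha, retractUnit, Adjunction.homEquiv_unit]

lemma pairingBeta_retractCounit {X : A} {Y : B} (g : X ⟶ R.obj Y) :
    pairingBeta L R (retractCounit adj pL pR) g =
      pL.app X ≫ (adj.homEquiv X Y).symm (g ≫ pR.app Y) := by
  simp [pairingBeta, retractCounit, Adjunction.homEquiv_counit]

lemma pairingBeta_pairingAlpha_retract (hiR : ∀ Y : B, iR.app Y ≫ pR.app Y = 𝟙 (R'.obj Y))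
    {X : A} {Y : B} (f : L.obj X ⟶ Y) :
    pairingBeta L R (retractCounit adj pL pR) (pairingAlpha L R (retractUnit adj iL iR) f) =
      pL.app X ≫ iL.app X ≫ f := by
  rw [pairingAlpha_retractUnit, pairingBeta_retractCounit, Category.assoc, hiR,
    Category.comp_id, Equiv.symm_apply_apply]

lemma pairingAlpha_pairingBeta_retract (hiL : ∀ X : A, iL.app X ≫ pL.app X = 𝟙 (L'.obj X))
    {X : A} {Y : B} (g : X ⟶ R.obj Y) :
    pairingAlpha L R (retractUnit adj iL iR) (pairingBeta L R (retractCounit adj pL pR) g) =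
      g ≫ pR.app Y ≫ iR.app Y := by
  rw [pairingBeta_retractCounit, pairingAlpha_retractUnit, reassoc_of% hiL,
    Equiv.apply_symm_apply, Category.assoc]

lemma pairingEll_retract (hiR : ∀ Y : B, iR.app Y ≫ pR.app Y = 𝟙 (R'.obj Y)) (X : A) :
    pairingEll L R (retractUnit adj iL iR) (retractCounit adj pL pR) X = pL.app X ≫ iL.app X := by
  simpa [pairingBeta_pairingAlpha] using
    pairingBeta_pairingAlpha_retract adj iL pL iR pR hiR (𝟙 (L.obj X))

lemma pairingR_retract (hiL : ∀ X : A, iL.app X ≫ pL.app X = 𝟙 (L'.obj X)) (Y : B) :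
    pairingR L R (retractUnit adj iL iR) (retractCounit adj pL pR) Y = pR.app Y ≫ iR.app Y := by
  simpa [pairingAlpha_pairingBeta] using
    pairingAlpha_pairingBeta_retract adj iL pL iR pR hiL (𝟙 (R.obj Y))

end retract

variable (L R)

/-- `(L, R)` admits a regular pairing with splitting idempotents
`ℓ`, `r` iff there are retractions `L' → L → L'` and `R' → R → R'` such that
`(L', R')` is an adjoint pair. -/
theorem regular_pairing_split_iff_adjoint_retract :
    (∃ (η : 𝟭 A ⟶ L ⋙ R) (ε : R ⋙ L ⟶ 𝟭 B),
      (∀ (X : A) (Y : B) (f : L.obj X ⟶ Y),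
        pairingAlpha L R η (pairingBeta L R ε (pairingAlpha L R η f)) = pairingAlpha L R η f) ∧
      (∀ (X : A) (Y : B) (g : X ⟶ R.obj Y),
        pairingBeta L R ε (pairingAlpha L R η (pairingBeta L R ε g)) = pairingBeta L R ε g) ∧
      (∃ (L' : A ⥤ B) (pL : L ⟶ L') (iL : L' ⟶ L),
        (∀ X : A, pL.app X ≫ iL.app X = pairingEll L R η ε X) ∧
        (∀ X : A, iL.app X ≫ pL.app X = 𝟙 (L'.obj X))) ∧
      (∃ (R' : B ⥤ A) (pR : R ⟶ R') (iR : R' ⟶ R),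
        (∀ Y : B, pR.app Y ≫ iR.app Y = pairingR L R η ε Y) ∧
        (∀ Y : B, iR.app Y ≫ pR.app Y = 𝟙 (R'.obj Y))))
    ↔
    (∃ (L' : A ⥤ B) (R' : B ⥤ A) (iL : L' ⟶ L) (pL : L ⟶ L')
        (iR : R' ⟶ R) (pR : R ⟶ R'),
      (∀ X : A, iL.app X ≫ pL.app X = 𝟙 (L'.obj X)) ∧
      (∀ Y : B, iR.app Y ≫ pR.app Y = 𝟙 (R'.obj Y)) ∧
      Nonempty (L' ⊣ R')) := by
  constructor
  · rintro ⟨η, ε, hα, hβ, ⟨L', pL, iL, hℓ, hiL⟩, ⟨R', pR, iR, hr, hiR⟩⟩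
    exact ⟨L', R', iL, pL, iR, pR, hiL, hiR,
      ⟨adjunctionOfSplitRegularPairing η ε hα hβ pL iL hℓ hiL pR iR hr hiR⟩⟩
  · rintro ⟨L', R', iL, pL, iR, pR, hiL, hiR, ⟨adj⟩⟩
    refine ⟨retractUnit adj iL iR, retractCounit adj pL pR, fun X Y f => ?_, fun X Y g => ?_,
      ⟨L', pL, iL, fun X => (pairingEll_retract adj iL pL iR pR hiR X).symm, hiL⟩,
      ⟨R', pR, iR, fun Y => (pairingR_retract adj iL pL iR pR hiL Y).symm, hiR⟩⟩
    · rw [pairingBeta_pairingAlpha_retract adj iL pL iR pR hiR, pairingAlpha_retractUnit,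
        pairingAlpha_retractUnit, reassoc_of% hiL]
    · rw [pairingAlpha_pairingBeta_retract adj iL pL iR pR hiL, pairingBeta_retractCounit,
        pairingBeta_retractCounit, Category.assoc, Category.assoc, hiR, Category.comp_id]

end
end

section
/- Let (L, R, α, β) be a regular pairing with η: I_A → RL and ε: LR → I_B, and define δ := ℓRLr · LηR : LR → LRLR. Then (LR, δ, ε) is a weak comonad on B, i.e., δ is coassociative and εLR·δ = ℓr = LRε·δ. Moreover, if β is symmetric (Lr = ℓR), then δ = LηR. -/
open CategoryTheory

universe v₁ u₁ v₂ u₂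

section

variable {A : Type u₁} [Category.{v₁} A] {B : Type u₂} [Category.{v₂} B]
variable (L : A ⥤ B) (R : B ⥤ A)

/-- `ℓr : LR ⟶ LR` (componentwise). -/
def ellR (η : 𝟭 A ⟶ L ⋙ R) (ε : R ⋙ L ⟶ 𝟭 B) (Y : B) :
    L.obj (R.obj Y) ⟶ L.obj (R.obj Y) :=
  L.map (pairingR L R η ε Y) ≫ pairingEll L R η ε (R.obj Y)

/-- `δ := ℓRLr·LηR : LR ⟶ LRLR` (componentwise). -/
def weakCoprod (η : 𝟭 A ⟶ L ⋙ R) (ε : R ⋙ L ⟶ 𝟭 B) (Y : B) :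
    L.obj (R.obj Y) ⟶ L.obj (R.obj (L.obj (R.obj Y))) :=
  L.map (η.app (R.obj Y)) ≫ L.map (R.map (L.map (pairingR L R η ε Y))) ≫
    pairingEll L R η ε (R.obj (L.obj (R.obj Y)))


section Aux

variable (η : 𝟭 A ⟶ L ⋙ R) (ε : R ⋙ L ⟶ 𝟭 B)

lemma natEta {X X' : A} (h : X ⟶ X') :
    h ≫ η.app X' = η.app X ≫ R.map (L.map h) := by
  simpa using η.naturality h

lemma natEps {Y Y' : B} (h : Y ⟶ Y') :
    L.map (R.map h) ≫ ε.app Y' = ε.app Y ≫ h := by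
  simpa using ε.naturality h

lemma ellNat {X X' : A} (h : X ⟶ X') :
    L.map h ≫ pairingEll L R η ε X' = pairingEll L R η ε X ≫ L.map h := by
  unfold pairingEll
  rw [← Category.assoc, ← L.map_comp, natEta L R η h, L.map_comp, Category.assoc,
    natEps L R ε (L.map h), Category.assoc]

lemma rNat {Y Y' : B} (h : Y ⟶ Y') :
    R.map h ≫ pairingR L R η ε Y' = pairingR L R η ε Y ≫ R.map h := by
  unfold pairingR
  rw [← Category.assoc, natEta L R η (R.map h), Category.assoc, ← R.map_comp,
    natEps L R ε h, R.map_comp, Category.assoc]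

lemma eqE1 (regβ : ∀ (X : A) (Y : B) (g : X ⟶ R.obj Y),
      pairingBeta L R ε (pairingAlpha L R η (pairingBeta L R ε g)) = pairingBeta L R ε g)
    (Y : B) : L.map (pairingR L R η ε Y) ≫ ε.app Y = ε.app Y := by
  have h := regβ (R.obj Y) Y (𝟙 (R.obj Y))
  simp only [pairingBeta, pairingAlpha, pairingR, L.map_id, Category.id_comp] at h ⊢
  simpa using h

lemma eqE2 (regα : ∀ (X : A) (Y : B) (f : L.obj X ⟶ Y),
      pairingAlpha L R η (pairingBeta L R ε (pairingAlpha L R η f)) = pairingAlpha L R η f)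
    (X : A) : η.app X ≫ R.map (pairingEll L R η ε X) = η.app X := by
  have h := regα X (L.obj X) (𝟙 (L.obj X))
  simp only [pairingBeta, pairingAlpha, pairingEll, R.map_id, Category.comp_id] at h ⊢
  simpa using h

variable (regα : ∀ (X : A) (Y : B) (f : L.obj X ⟶ Y),
      pairingAlpha L R η (pairingBeta L R ε (pairingAlpha L R η f)) = pairingAlpha L R η f)
variable (regβ : ∀ (X : A) (Y : B) (g : X ⟶ R.obj Y),
      pairingBeta L R ε (pairingAlpha L R η (pairingBeta L R ε g)) = pairingBeta L R ε g)

include regβ in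
lemma eqE3 (Y : B) : pairingEll L R η ε (R.obj Y) ≫ ε.app Y = ε.app Y := by
  have e1 := eqE1 L R η ε regβ Y
  rw [pairingR] at e1
  have n := natEps L R ε (ε.app Y)
  simp only [Functor.comp_obj, Functor.id_obj] at n
  rw [pairingEll, Category.assoc, ← n, ← Category.assoc, ← L.map_comp]
  exact e1

include regα in
lemma eqE4 (X : A) : η.app X ≫ pairingR L R η ε (L.obj X) = η.app X := by
  have e2 := eqE2 L R η ε regα X
  rw [pairingEll] at e2
  have n := natEta L R η (η.app X)
  simp only [Functor.comp_obj, Functor.id_obj] at n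
  rw [pairingR, ← Category.assoc, n, Category.assoc, ← R.map_comp]
  exact e2

include regβ in
lemma rIdem (Y : B) : pairingR L R η ε Y ≫ pairingR L R η ε Y = pairingR L R η ε Y := by
  have e1 := eqE1 L R η ε regβ Y
  nth_rewrite 2 [pairingR]
  rw [← Category.assoc, natEta L R η (pairingR L R η ε Y), Category.assoc, ← R.map_comp, e1,
    ← pairingR]

include regα in
lemma lIdem (X : A) :
    pairingEll L R η ε X ≫ pairingEll L R η ε X = pairingEll L R η ε X := by
  have e2 := eqE2 L R η ε regα X
  nth_rewrite 1 [pairingEll]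
  rw [Category.assoc, ← natEps L R ε (pairingEll L R η ε X), ← Category.assoc, ← L.map_comp,
    e2, ← pairingEll]

lemma deltaE (Y : B) :
    weakCoprod L R η ε Y
      = L.map (pairingR L R η ε Y) ≫ pairingEll L R η ε (R.obj Y)
          ≫ L.map (η.app (R.obj Y)) := by
  have n := ellNat L R η ε (η.app (R.obj Y))
  simp only [Functor.comp_obj, Functor.id_obj] at n
  rw [weakCoprod, ← Category.assoc, ← L.map_comp,
    ← natEta L R η (pairingR L R η ε Y), L.map_comp, Category.assoc, n]

end Aux

/-- For a regular pairing `(L,R,α,β)`, with `δ := ℓRLr·LηR`, the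
triple `(LR, δ, ε)` is a weak comonad: `δ` is coassociative and
`εLR·δ = ℓr = LRε·δ`. If `β` is symmetric then `δ = LηR`. -/
theorem regular_pairing_weak_comonad
    (η : 𝟭 A ⟶ L ⋙ R) (ε : R ⋙ L ⟶ 𝟭 B)
    (regα : ∀ (X : A) (Y : B) (f : L.obj X ⟶ Y),
      pairingAlpha L R η (pairingBeta L R ε (pairingAlpha L R η f)) = pairingAlpha L R η f)
    (regβ : ∀ (X : A) (Y : B) (g : X ⟶ R.obj Y),
      pairingBeta L R ε (pairingAlpha L R η (pairingBeta L R ε g)) = pairingBeta L R ε g) :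
    (∀ Y : B, weakCoprod L R η ε Y ≫ L.map (R.map (weakCoprod L R η ε Y))
        = weakCoprod L R η ε Y ≫ weakCoprod L R η ε (L.obj (R.obj Y))) ∧
    (∀ Y : B, weakCoprod L R η ε Y ≫ ε.app (L.obj (R.obj Y)) = ellR L R η ε Y) ∧
    (∀ Y : B, weakCoprod L R η ε Y ≫ L.map (R.map (ε.app Y)) = ellR L R η ε Y) ∧
    ((∀ Y : B, L.map (pairingR L R η ε Y) = pairingEll L R η ε (R.obj Y)) →
      ∀ Y : B, weakCoprod L R η ε Y = L.map (η.app (R.obj Y))) := by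
  refine ⟨?_, ?_, ?_, ?_⟩
  · intro Y
    rw [deltaE L R η ε Y, deltaE L R η ε (L.obj (R.obj Y))]
    have n1 : L.map (η.app (R.obj Y)) ≫ L.map (R.map (L.map (pairingR L R η ε Y)))
        = L.map (pairingR L R η ε Y) ≫ L.map (η.app (R.obj Y)) := by
      rw [← L.map_comp, ← natEta L R η (pairingR L R η ε Y), L.map_comp]
    have n2 : L.map (η.app (R.obj Y)) ≫ L.map (R.map (L.map (η.app (R.obj Y))))
        = L.map (η.app (R.obj Y)) ≫ L.map (η.app (R.obj (L.obj (R.obj Y)))) := by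
      have h := natEta L R η (η.app (R.obj Y))
      simp only [Functor.comp_obj, Functor.id_obj] at h
      rw [← L.map_comp, ← h, L.map_comp]
    have n3 : L.map (η.app (R.obj Y)) ≫ pairingEll L R η ε (R.obj (L.obj (R.obj Y)))
        = pairingEll L R η ε (R.obj Y) ≫ L.map (η.app (R.obj Y)) := by
      have h := ellNat L R η ε (η.app (R.obj Y))
      simpa only [Functor.comp_obj, Functor.id_obj] using h
    simp only [R.map_comp, L.map_comp, Category.assoc]
    slice_lhs 3 4 => rw [n1]
    slice_lhs 4 5 => rw [← L.map_comp, eqE2 L R η ε regα (R.obj Y)]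
    slice_lhs 4 5 => rw [n2]
    slice_lhs 2 3 => rw [← ellNat L R η ε (pairingR L R η ε Y)]
    slice_lhs 1 2 => rw [← L.map_comp, rIdem L R η ε regβ Y]
    slice_rhs 3 4 => rw [← L.map_comp, eqE4 L R η ε regα (R.obj Y)]
    slice_rhs 3 4 => rw [n3]
    slice_rhs 2 3 => rw [lIdem L R η ε regα (R.obj Y)]
    simp only [Category.assoc]
  · intro Y
    rw [deltaE L R η ε Y, ellR]
    simp only [Category.assoc]
    rw [← pairingEll, lIdem L R η ε regα (R.obj Y)]
  · intro Y
    rw [deltaE L R η ε Y, ellR]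
    simp only [Category.assoc]
    rw [← L.map_comp, ← pairingR, ← ellNat L R η ε (pairingR L R η ε Y), ← Category.assoc,
      ← L.map_comp, rIdem L R η ε regβ Y]
  · intro hsym Y
    rw [deltaE L R η ε Y, hsym Y, ← Category.assoc, lIdem L R η ε regα (R.obj Y), ← hsym Y,
      ← L.map_comp, natEta L R η (pairingR L R η ε Y), L.map_comp, hsym Y, ← L.map_comp,
      eqE2 L R η ε regα (R.obj Y)]

end
end

section
/- Let (L, R, α, β) be a regular pairing and define m := RεL · rLRℓ : RLRL → RL. Then (RL, m, η) is a weak monad on A, i.e., m is associative and m·ηRL = rℓ = m·RLη. If α is symmetric (Rℓ = rL), then m = RεL. -/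
open CategoryTheory

universe v₁ u₁ v₂ u₂

section

variable {A : Type u₁} [Category.{v₁} A] {B : Type u₂} [Category.{v₂} B]
variable (L : A ⥤ B) (R : B ⥤ A)

/-- `rℓ : RL ⟶ RL` (componentwise). -/
def rEll (η : 𝟭 A ⟶ L ⋙ R) (ε : R ⋙ L ⟶ 𝟭 B) (X : A) :
    R.obj (L.obj X) ⟶ R.obj (L.obj X) :=
  R.map (pairingEll L R η ε X) ≫ pairingR L R η ε (L.obj X)

/-- `m := RεL·rLRℓ : RLRL ⟶ RL` (componentwise). -/
def weakProd (η : 𝟭 A ⟶ L ⋙ R) (ε : R ⋙ L ⟶ 𝟭 B) (X : A) :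
    R.obj (L.obj (R.obj (L.obj X))) ⟶ R.obj (L.obj X) :=
  R.map (L.map (R.map (pairingEll L R η ε X))) ≫
    pairingR L R η ε (L.obj (R.obj (L.obj X))) ≫ R.map (ε.app (L.obj X))

variable (η : 𝟭 A ⟶ L ⋙ R) (ε : R ⋙ L ⟶ 𝟭 B)

lemma my_r_nat {Y Y' : B} (f : Y ⟶ Y') :
    R.map f ≫ pairingR L R η ε Y' = pairingR L R η ε Y ≫ R.map f := by
  have h1 : R.map f ≫ η.app (R.obj Y') = η.app (R.obj Y) ≫ R.map (L.map (R.map f)) :=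
    η.naturality (R.map f)
  have h2 : L.map (R.map f) ≫ ε.app Y' = ε.app Y ≫ f := ε.naturality f
  calc R.map f ≫ pairingR L R η ε Y'
      = (R.map f ≫ η.app (R.obj Y')) ≫ R.map (ε.app Y') := by
        simp [pairingR]
    _ = η.app (R.obj Y) ≫ R.map (L.map (R.map f) ≫ ε.app Y') := by
        rw [h1]; simp [Functor.map_comp, Category.assoc]
    _ = η.app (R.obj Y) ≫ R.map (ε.app Y ≫ f) := by rw [h2]
    _ = pairingR L R η ε Y ≫ R.map f := by simp [pairingR, Functor.map_comp, Category.assoc]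

lemma my_eta_r (hA : ∀ X, η.app X ≫ R.map (pairingEll L R η ε X) = η.app X) (X : A) :
    η.app X ≫ pairingR L R η ε (L.obj X) = η.app X := by
  have h1 : η.app X ≫ η.app (R.obj (L.obj X)) = η.app X ≫ R.map (L.map (η.app X)) :=
    η.naturality (η.app X)
  calc η.app X ≫ pairingR L R η ε (L.obj X)
      = (η.app X ≫ η.app (R.obj (L.obj X))) ≫ R.map (ε.app (L.obj X)) := by
        simp [pairingR]
    _ = (η.app X ≫ R.map (L.map (η.app X))) ≫ R.map (ε.app (L.obj X)) := by rw [h1]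
    _ = η.app X ≫ R.map (pairingEll L R η ε X) := by
        simp [pairingEll, Functor.map_comp, Category.assoc]
    _ = η.app X := hA X

lemma my_ell_idem (hA : ∀ X, η.app X ≫ R.map (pairingEll L R η ε X) = η.app X) (X : A) :
    pairingEll L R η ε X ≫ pairingEll L R η ε X = pairingEll L R η ε X := by
  have h1 : L.map (R.map (L.map (η.app X))) ≫ ε.app (L.obj (R.obj (L.obj X)))
      = ε.app (L.obj X) ≫ L.map (η.app X) := ε.naturality (L.map (η.app X))
  have h2 : L.map (R.map (ε.app (L.obj X))) ≫ ε.app (L.obj X)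
      = ε.app (L.obj (R.obj (L.obj X))) ≫ ε.app (L.obj X) := ε.naturality (ε.app (L.obj X))
  have h3 : η.app X ≫ η.app (R.obj (L.obj X)) = η.app X ≫ R.map (L.map (η.app X)) :=
    η.naturality (η.app X)
  calc pairingEll L R η ε X ≫ pairingEll L R η ε X
      = L.map (η.app X) ≫ (ε.app (L.obj X) ≫ L.map (η.app X)) ≫ ε.app (L.obj X) := by
        simp [pairingEll]
    _ = L.map (η.app X) ≫ L.map (R.map (L.map (η.app X))) ≫
          ε.app (L.obj (R.obj (L.obj X))) ≫ ε.app (L.obj X) := by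
        rw [← h1]; simp [Category.assoc]
    _ = L.map (η.app X) ≫ L.map (R.map (L.map (η.app X))) ≫
          L.map (R.map (ε.app (L.obj X))) ≫ ε.app (L.obj X) := by rw [h2]
    _ = L.map (η.app X ≫ R.map (L.map (η.app X)) ≫ R.map (ε.app (L.obj X))) ≫ ε.app (L.obj X) := by
        simp [Functor.map_comp, Category.assoc]
    _ = L.map (η.app X ≫ pairingR L R η ε (L.obj X)) ≫ ε.app (L.obj X) := by
        rw [← Category.assoc (η.app X), ← h3]
        simp [pairingR, Category.assoc]
    _ = pairingEll L R η ε X := by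
        rw [my_eta_r L R η ε hA X]
        simp [pairingEll]

lemma my_r_idem (hB : ∀ Y, L.map (pairingR L R η ε Y) ≫ ε.app Y = ε.app Y) (Y : B) :
    pairingR L R η ε Y ≫ pairingR L R η ε Y = pairingR L R η ε Y := by
  have h1 : R.map (ε.app Y) ≫ η.app (R.obj Y)
      = η.app (R.obj (L.obj (R.obj Y))) ≫ R.map (L.map (R.map (ε.app Y))) :=
    η.naturality (R.map (ε.app Y))
  have h2 : η.app (R.obj Y) ≫ η.app (R.obj (L.obj (R.obj Y)))
      = η.app (R.obj Y) ≫ R.map (L.map (η.app (R.obj Y))) := η.naturality (η.app (R.obj Y))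
  calc pairingR L R η ε Y ≫ pairingR L R η ε Y
      = η.app (R.obj Y) ≫ (R.map (ε.app Y) ≫ η.app (R.obj Y)) ≫ R.map (ε.app Y) := by
        simp [pairingR]
    _ = (η.app (R.obj Y) ≫ η.app (R.obj (L.obj (R.obj Y)))) ≫
          R.map (L.map (R.map (ε.app Y))) ≫ R.map (ε.app Y) := by
        rw [h1]; simp [Category.assoc]
    _ = (η.app (R.obj Y) ≫ R.map (L.map (η.app (R.obj Y)))) ≫
          R.map (L.map (R.map (ε.app Y))) ≫ R.map (ε.app Y) := by rw [h2]
    _ = η.app (R.obj Y) ≫ R.map (L.map (pairingR L R η ε Y) ≫ ε.app Y) := by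
        simp [pairingR, Functor.map_comp, Category.assoc]
    _ = pairingR L R η ε Y := by rw [hB Y]; simp [pairingR]

lemma my_ell_eps (hB : ∀ Y, L.map (pairingR L R η ε Y) ≫ ε.app Y = ε.app Y) (X : A) :
    pairingEll L R η ε (R.obj (L.obj X)) ≫ ε.app (L.obj X) = ε.app (L.obj X) := by
  have h2 : L.map (R.map (ε.app (L.obj X))) ≫ ε.app (L.obj X)
      = ε.app (L.obj (R.obj (L.obj X))) ≫ ε.app (L.obj X) := ε.naturality (ε.app (L.obj X))
  calc pairingEll L R η ε (R.obj (L.obj X)) ≫ ε.app (L.obj X)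
      = L.map (η.app (R.obj (L.obj X))) ≫ ε.app (L.obj (R.obj (L.obj X))) ≫ ε.app (L.obj X) := by
        simp [pairingEll]
    _ = L.map (η.app (R.obj (L.obj X))) ≫ L.map (R.map (ε.app (L.obj X))) ≫ ε.app (L.obj X) := by
        rw [h2]
    _ = L.map (pairingR L R η ε (L.obj X)) ≫ ε.app (L.obj X) := by
        simp [pairingR, Functor.map_comp, Category.assoc]
    _ = ε.app (L.obj X) := hB (L.obj X)

lemma my_m_alt (X : A) :
    weakProd L R η ε X
      = pairingR L R η ε (L.obj (R.obj (L.obj X))) ≫ R.map (ε.app (L.obj X)) ≫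
          R.map (pairingEll L R η ε X) := by
  have h1 : R.map (L.map (R.map (pairingEll L R η ε X))) ≫
        pairingR L R η ε (L.obj (R.obj (L.obj X)))
      = pairingR L R η ε (L.obj (R.obj (L.obj X))) ≫
        R.map (L.map (R.map (pairingEll L R η ε X))) :=
    my_r_nat L R η ε (L.map (R.map (pairingEll L R η ε X)))
  have h2 : L.map (R.map (pairingEll L R η ε X)) ≫ ε.app (L.obj X)
      = ε.app (L.obj X) ≫ pairingEll L R η ε X := ε.naturality (pairingEll L R η ε X)
  calc weakProd L R η ε X
      = (R.map (L.map (R.map (pairingEll L R η ε X))) ≫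
          pairingR L R η ε (L.obj (R.obj (L.obj X)))) ≫ R.map (ε.app (L.obj X)) := by
        simp [weakProd, Category.assoc]
    _ = pairingR L R η ε (L.obj (R.obj (L.obj X))) ≫
          R.map (L.map (R.map (pairingEll L R η ε X)) ≫ ε.app (L.obj X)) := by
        rw [h1]; simp [Functor.map_comp, Category.assoc]
    _ = pairingR L R η ε (L.obj (R.obj (L.obj X))) ≫
          R.map (ε.app (L.obj X) ≫ pairingEll L R η ε X) := by rw [h2]
    _ = _ := by simp [Functor.map_comp, Category.assoc]

lemma my_unit_left (hA : ∀ X, η.app X ≫ R.map (pairingEll L R η ε X) = η.app X) (X : A) :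
    η.app (R.obj (L.obj X)) ≫ weakProd L R η ε X = rEll L R η ε X := by
  have h1 : R.map (pairingEll L R η ε X) ≫ η.app (R.obj (L.obj X))
      = η.app (R.obj (L.obj X)) ≫ R.map (L.map (R.map (pairingEll L R η ε X))) :=
    η.naturality (R.map (pairingEll L R η ε X))
  have h2 : η.app (R.obj (L.obj X)) ≫ pairingR L R η ε (L.obj (R.obj (L.obj X)))
      = η.app (R.obj (L.obj X)) := my_eta_r L R η ε hA (R.obj (L.obj X))
  calc η.app (R.obj (L.obj X)) ≫ weakProd L R η ε X
      = (η.app (R.obj (L.obj X)) ≫ R.map (L.map (R.map (pairingEll L R η ε X)))) ≫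
          pairingR L R η ε (L.obj (R.obj (L.obj X))) ≫ R.map (ε.app (L.obj X)) := by
        simp [weakProd, Category.assoc]
    _ = R.map (pairingEll L R η ε X) ≫
          (η.app (R.obj (L.obj X)) ≫ pairingR L R η ε (L.obj (R.obj (L.obj X)))) ≫
          R.map (ε.app (L.obj X)) := by
        rw [← h1]; simp [Category.assoc]
    _ = R.map (pairingEll L R η ε X) ≫ η.app (R.obj (L.obj X)) ≫ R.map (ε.app (L.obj X)) := by
        rw [h2]
    _ = rEll L R η ε X := by simp [rEll, pairingR]

lemma my_unit_right (hA : ∀ X, η.app X ≫ R.map (pairingEll L R η ε X) = η.app X) (X : A) :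
    R.map (L.map (η.app X)) ≫ weakProd L R η ε X = rEll L R η ε X := by
  have h2 : R.map (L.map (η.app X)) ≫ pairingR L R η ε (L.obj (R.obj (L.obj X)))
      = pairingR L R η ε (L.obj X) ≫ R.map (L.map (η.app X)) :=
    my_r_nat L R η ε (L.map (η.app X))
  have h4 : R.map (pairingEll L R η ε X) ≫ pairingR L R η ε (L.obj X)
      = pairingR L R η ε (L.obj X) ≫ R.map (pairingEll L R η ε X) :=
    my_r_nat L R η ε (pairingEll L R η ε X)
  calc R.map (L.map (η.app X)) ≫ weakProd L R η ε X
      = R.map (L.map (η.app X ≫ R.map (pairingEll L R η ε X))) ≫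
          pairingR L R η ε (L.obj (R.obj (L.obj X))) ≫ R.map (ε.app (L.obj X)) := by
        simp [weakProd, Functor.map_comp, Category.assoc]
    _ = (R.map (L.map (η.app X)) ≫ pairingR L R η ε (L.obj (R.obj (L.obj X)))) ≫
          R.map (ε.app (L.obj X)) := by
        rw [hA X]; simp [Category.assoc]
    _ = pairingR L R η ε (L.obj X) ≫ R.map (L.map (η.app X) ≫ ε.app (L.obj X)) := by
        rw [h2]; simp [Functor.map_comp, Category.assoc]
    _ = pairingR L R η ε (L.obj X) ≫ R.map (pairingEll L R η ε X) := by
        simp [pairingEll]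
    _ = rEll L R η ε X := by rw [← h4]; simp [rEll]

lemma my_symm (hB : ∀ Y, L.map (pairingR L R η ε Y) ≫ ε.app Y = ε.app Y)
    (hs : ∀ X : A, R.map (pairingEll L R η ε X) = pairingR L R η ε (L.obj X)) (X : A) :
    weakProd L R η ε X = R.map (ε.app (L.obj X)) := by
  have h1 : R.map (ε.app (L.obj X)) ≫ pairingR L R η ε (L.obj X)
      = pairingR L R η ε (L.obj (R.obj (L.obj X))) ≫ R.map (ε.app (L.obj X)) :=
    my_r_nat L R η ε (ε.app (L.obj X))
  have he : R.map (pairingEll L R η ε (R.obj (L.obj X))) ≫ R.map (ε.app (L.obj X))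
      = R.map (ε.app (L.obj X)) := by
    rw [← Functor.map_comp, my_ell_eps L R η ε hB X]
  calc weakProd L R η ε X
      = pairingR L R η ε (L.obj (R.obj (L.obj X))) ≫ R.map (ε.app (L.obj X)) ≫
          R.map (pairingEll L R η ε X) := my_m_alt L R η ε X
    _ = R.map (pairingEll L R η ε (R.obj (L.obj X))) ≫ R.map (ε.app (L.obj X)) ≫
          R.map (pairingEll L R η ε X) := by rw [hs (R.obj (L.obj X))]
    _ = R.map (ε.app (L.obj X)) ≫ R.map (pairingEll L R η ε X) := by
        rw [← Category.assoc, he]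
    _ = R.map (ε.app (L.obj X)) ≫ pairingR L R η ε (L.obj X) := by rw [hs X]
    _ = R.map (pairingEll L R η ε (R.obj (L.obj X))) ≫ R.map (ε.app (L.obj X)) := by
        rw [h1, hs (R.obj (L.obj X))]
    _ = R.map (ε.app (L.obj X)) := he

lemma my_assoc (hA : ∀ X, η.app X ≫ R.map (pairingEll L R η ε X) = η.app X)
    (hB : ∀ Y, L.map (pairingR L R η ε Y) ≫ ε.app Y = ε.app Y) (X : A) :
    R.map (L.map (weakProd L R η ε X)) ≫ weakProd L R η ε X
      = weakProd L R η ε (R.obj (L.obj X)) ≫ weakProd L R η ε X := by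
  have c1 : R.map (L.map (R.map (pairingEll L R η ε X))) ≫
        pairingR L R η ε (L.obj (R.obj (L.obj X)))
      = pairingR L R η ε (L.obj (R.obj (L.obj X))) ≫
        R.map (L.map (R.map (pairingEll L R η ε X))) :=
    my_r_nat L R η ε (L.map (R.map (pairingEll L R η ε X)))
  have c2 : R.map (L.map (R.map (ε.app (L.obj X)))) ≫
        pairingR L R η ε (L.obj (R.obj (L.obj X)))
      = pairingR L R η ε (L.obj (R.obj (L.obj (R.obj (L.obj X))))) ≫
        R.map (L.map (R.map (ε.app (L.obj X)))) :=
    my_r_nat L R η ε (L.map (R.map (ε.app (L.obj X))))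
  have c3 : R.map (L.map (pairingR L R η ε (L.obj (R.obj (L.obj X))))) ≫
        pairingR L R η ε (L.obj (R.obj (L.obj (R.obj (L.obj X)))))
      = pairingR L R η ε (L.obj (R.obj (L.obj (R.obj (L.obj X))))) ≫
        R.map (L.map (pairingR L R η ε (L.obj (R.obj (L.obj X))))) :=
    my_r_nat L R η ε (L.map (pairingR L R η ε (L.obj (R.obj (L.obj X)))))
  have hn1 : L.map (R.map (pairingEll L R η ε X)) ≫ ε.app (L.obj X)
      = ε.app (L.obj X) ≫ pairingEll L R η ε X := ε.naturality (pairingEll L R η ε X)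
  have c4 : R.map (L.map (R.map (pairingEll L R η ε X))) ≫ R.map (ε.app (L.obj X))
      = R.map (ε.app (L.obj X)) ≫ R.map (pairingEll L R η ε X) := by
    rw [← R.map_comp, hn1, R.map_comp]
  have c5 : R.map (pairingEll L R η ε X) ≫ R.map (pairingEll L R η ε X)
      = R.map (pairingEll L R η ε X) := by
    rw [← R.map_comp, my_ell_idem L R η ε hA X]
  have hn2 : L.map (R.map (ε.app (L.obj X))) ≫ ε.app (L.obj X)
      = ε.app (L.obj (R.obj (L.obj X))) ≫ ε.app (L.obj X) := ε.naturality (ε.app (L.obj X))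
  have c6 : R.map (L.map (R.map (ε.app (L.obj X)))) ≫ R.map (ε.app (L.obj X))
      = R.map (ε.app (L.obj (R.obj (L.obj X)))) ≫ R.map (ε.app (L.obj X)) := by
    rw [← R.map_comp, hn2, R.map_comp]
  have c7 : R.map (L.map (pairingR L R η ε (L.obj (R.obj (L.obj X))))) ≫
        R.map (ε.app (L.obj (R.obj (L.obj X))))
      = R.map (ε.app (L.obj (R.obj (L.obj X)))) := by
    rw [← R.map_comp, hB (L.obj (R.obj (L.obj X)))]
  have d1 : R.map (ε.app (L.obj (R.obj (L.obj X)))) ≫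
        pairingR L R η ε (L.obj (R.obj (L.obj X)))
      = pairingR L R η ε (L.obj (R.obj (L.obj (R.obj (L.obj X))))) ≫
        R.map (ε.app (L.obj (R.obj (L.obj X)))) :=
    my_r_nat L R η ε (ε.app (L.obj (R.obj (L.obj X))))
  have d2 : pairingR L R η ε (L.obj (R.obj (L.obj (R.obj (L.obj X))))) ≫
        pairingR L R η ε (L.obj (R.obj (L.obj (R.obj (L.obj X)))))
      = pairingR L R η ε (L.obj (R.obj (L.obj (R.obj (L.obj X))))) :=
    my_r_idem L R η ε hB (L.obj (R.obj (L.obj (R.obj (L.obj X)))))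
  have d3 : R.map (L.map (R.map (pairingEll L R η ε (R.obj (L.obj X))))) ≫
        pairingR L R η ε (L.obj (R.obj (L.obj (R.obj (L.obj X)))))
      = pairingR L R η ε (L.obj (R.obj (L.obj (R.obj (L.obj X))))) ≫
        R.map (L.map (R.map (pairingEll L R η ε (R.obj (L.obj X))))) :=
    my_r_nat L R η ε (L.map (R.map (pairingEll L R η ε (R.obj (L.obj X)))))
  have hn3 : L.map (R.map (pairingEll L R η ε (R.obj (L.obj X)))) ≫
        ε.app (L.obj (R.obj (L.obj X)))
      = ε.app (L.obj (R.obj (L.obj X))) ≫ pairingEll L R η ε (R.obj (L.obj X)) :=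
    ε.naturality (pairingEll L R η ε (R.obj (L.obj X)))
  have d4 : R.map (L.map (R.map (pairingEll L R η ε (R.obj (L.obj X))))) ≫
        R.map (ε.app (L.obj (R.obj (L.obj X))))
      = R.map (ε.app (L.obj (R.obj (L.obj X)))) ≫
        R.map (pairingEll L R η ε (R.obj (L.obj X))) := by
    rw [← R.map_comp, hn3, R.map_comp]
  have d5 : R.map (pairingEll L R η ε (R.obj (L.obj X))) ≫ R.map (ε.app (L.obj X))
      = R.map (ε.app (L.obj X)) := by
    rw [← R.map_comp, my_ell_eps L R η ε hB X]
  rw [my_m_alt L R η ε X]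
  simp only [weakProd, Functor.map_comp, Category.assoc]
  rw [reassoc_of% c1, reassoc_of% c2, reassoc_of% c3, reassoc_of% c4, c5,
      reassoc_of% c6, reassoc_of% c7, reassoc_of% d1, reassoc_of% d2,
      reassoc_of% d3, reassoc_of% d4, reassoc_of% d5]

/-- For a regular pairing `(L,R,α,β)`, with `m := RεL·rLRℓ`, the
triple `(RL, m, η)` is a weak monad: `m` is associative and
`m·ηRL = rℓ = m·RLη`. If `α` is symmetric then `m = RεL`. -/
theorem regular_pairing_weak_monad
    (η : 𝟭 A ⟶ L ⋙ R) (ε : R ⋙ L ⟶ 𝟭 B)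
    (regα : ∀ (X : A) (Y : B) (f : L.obj X ⟶ Y),
      pairingAlpha L R η (pairingBeta L R ε (pairingAlpha L R η f)) = pairingAlpha L R η f)
    (regβ : ∀ (X : A) (Y : B) (g : X ⟶ R.obj Y),
      pairingBeta L R ε (pairingAlpha L R η (pairingBeta L R ε g)) = pairingBeta L R ε g) :
    (∀ X : A, R.map (L.map (weakProd L R η ε X)) ≫ weakProd L R η ε X
        = weakProd L R η ε (R.obj (L.obj X)) ≫ weakProd L R η ε X) ∧
    (∀ X : A, η.app (R.obj (L.obj X)) ≫ weakProd L R η ε X = rEll L R η ε X) ∧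
    (∀ X : A, R.map (L.map (η.app X)) ≫ weakProd L R η ε X = rEll L R η ε X) ∧
    ((∀ X : A, R.map (pairingEll L R η ε X) = pairingR L R η ε (L.obj X)) →
      ∀ X : A, weakProd L R η ε X = R.map (ε.app (L.obj X))) := by
  have hA : ∀ X : A, η.app X ≫ R.map (pairingEll L R η ε X) = η.app X := by
    intro X
    have h := regα X (L.obj X) (𝟙 (L.obj X))
    simp [pairingAlpha, pairingBeta] at h
    simpa [pairingEll, Functor.map_comp, Category.assoc] using h
  have hB : ∀ Y : B, L.map (pairingR L R η ε Y) ≫ ε.app Y = ε.app Y := by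
    intro Y
    have h := regβ (R.obj Y) Y (𝟙 (R.obj Y))
    simp [pairingAlpha, pairingBeta] at h
    simpa [pairingR, Functor.map_comp, Category.assoc] using h
  exact ⟨my_assoc L R η ε hA hB, my_unit_left L R η ε hA, my_unit_right L R η ε hA,
    fun hs => my_symm L R η ε hB hs⟩

end
end

section
/- If (G, δ, ε) is a weak comonad on B, then every compatible G-comodule (B, υ) (i.e., υ: B → G(B) with G(υ)·υ = δ_B·υ and υ = Gε_B·δ_B·υ) is K_γ-cofirm: the cofork B →υ G(B) ⇉ GG(B) (with parallel arrows δ_B and G(υ)) is a K_γ-equaliser, where K_γ is the class of γ-compatible comodule morphisms. -/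
open CategoryTheory

universe v u

section

variable {B : Type u} [Category.{v} B]

/-- A non-counital comodule over the pair `(G, δ)`. -/
structure NCComod (G : B ⥤ B) (δ : G ⟶ G ⋙ G) where
  pt : B
  co : pt ⟶ G.obj pt
  coassoc : co ≫ G.map co = co ≫ δ.app pt

/-- Morphism property in the category of non-counital `G`-comodules. -/
def IsComodHom {G : B ⥤ B} {δ : G ⟶ G ⋙ G} (X Y : NCComod G δ)
    (f : X.pt ⟶ Y.pt) : Prop :=
  X.co ≫ G.map f = f ≫ Y.co

/-- For a weak comonad `(G,δ,ε)`, every compatible `G`-comodule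
`(B₀,υ)` is `K_γ`-cofirm: its defining cofork is a `K_γ`-equaliser, where `K_γ`
is the ideal class of `γ`-compatible comodule morphisms. -/
theorem compatible_comodule_is_Kgamma_cofirm
    (G : B ⥤ B) (δ : G ⟶ G ⋙ G) (ε : G ⟶ 𝟭 B)
    (coassoc : ∀ X : B, δ.app X ≫ G.map (δ.app X) = δ.app X ≫ δ.app (G.obj X))
    (w1 : ∀ X : B, δ.app X ≫ G.map (ε.app X) ≫ ε.app X = ε.app X)
    (w2 : ∀ X : B, δ.app X ≫ G.map (δ.app X) ≫ G.map (ε.app (G.obj X)) = δ.app X)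
    (w3 : ∀ X : B, δ.app X ≫ G.map (ε.app X) = δ.app X ≫ ε.app (G.obj X))
    (B₀ : NCComod G δ)
    (compat : B₀.co ≫ δ.app B₀.pt ≫ G.map (ε.app B₀.pt) = B₀.co) :
    -- the structure map is a γ-compatible comodule morphism into the cofree comodule
    (IsComodHom B₀ ⟨G.obj B₀.pt, δ.app B₀.pt, coassoc B₀.pt⟩ B₀.co ∧
      B₀.co ≫ δ.app B₀.pt ≫ ε.app (G.obj B₀.pt) = B₀.co) ∧
    -- universal property among γ-compatible comodule morphisms
    (∀ (Q : NCComod G δ) (h : Q.pt ⟶ G.obj B₀.pt),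
      IsComodHom Q ⟨G.obj B₀.pt, δ.app B₀.pt, coassoc B₀.pt⟩ h →
      h ≫ δ.app B₀.pt ≫ ε.app (G.obj B₀.pt) = h →
      h ≫ δ.app B₀.pt = h ≫ G.map B₀.co →
      ∃ q : Q.pt ⟶ B₀.pt,
        (IsComodHom Q B₀ q ∧ q ≫ B₀.co ≫ ε.app B₀.pt = q ∧ q ≫ B₀.co = h) ∧
        ∀ q' : Q.pt ⟶ B₀.pt,
          (IsComodHom Q B₀ q' ∧ q' ≫ B₀.co ≫ ε.app B₀.pt = q' ∧ q' ≫ B₀.co = h) →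
          q' = q) := by
  constructor
  · refine ⟨B₀.coassoc, ?_⟩
    rw [← w3, compat]
  · intro Q h hcomod hγ heq
    have hnat : ε.app B₀.pt ≫ B₀.co = G.map B₀.co ≫ ε.app (G.obj B₀.pt) :=
      (ε.naturality B₀.co).symm
    have hfac : h ≫ ε.app B₀.pt ≫ B₀.co = h := by
      calc h ≫ ε.app B₀.pt ≫ B₀.co
          = (h ≫ G.map B₀.co) ≫ ε.app (G.obj B₀.pt) := by rw [hnat]; simp
        _ = (h ≫ δ.app B₀.pt) ≫ ε.app (G.obj B₀.pt) := by rw [heq]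
        _ = h := by rw [Category.assoc, hγ]
    refine ⟨h ≫ ε.app B₀.pt, ⟨?_, ?_, ?_⟩, ?_⟩
    · unfold IsComodHom at hcomod ⊢
      rw [G.map_comp, ← Category.assoc, hcomod]
      simp only [Category.assoc]
      rw [w3, hγ, hfac]
    · rw [← Category.assoc, Category.assoc h, hfac]
    · rw [Category.assoc, hfac]
    · rintro q' ⟨_, hq'γ, hq'fac⟩
      rw [← hq'γ, ← Category.assoc, hq'fac]

end
end

section
/- If (G, δ, ε) is a proper comonad (coassociative δ with εG·δ = id = Gε·δ), then a non-counital G-comodule (B, ω) (satisfying G(ω)·ω = δ_B·ω) is cofirm if and only if it is counital, i.e., ε_B·ω = id_B. -/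
open CategoryTheory

universe v u

section

variable {B : Type u} [Category.{v} B]

/-- For a proper comonad `(G,δ,ε)`, a non-counital `G`-comodule
is cofirm (its defining cofork is an equaliser in non-counital comodules) iff
it is counital. -/
theorem comonad_cofirm_iff_counital
    (G : B ⥤ B) (δ : G ⟶ G ⋙ G) (ε : G ⟶ 𝟭 B)
    (coassoc : ∀ X : B, δ.app X ≫ G.map (δ.app X) = δ.app X ≫ δ.app (G.obj X))
    (counit₁ : ∀ X : B, δ.app X ≫ G.map (ε.app X) = 𝟙 (G.obj X))
    (counit₂ : ∀ X : B, δ.app X ≫ ε.app (G.obj X) = 𝟙 (G.obj X))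
    (B₀ : NCComod G δ) :
    (∀ (Q : NCComod G δ) (h : Q.pt ⟶ G.obj B₀.pt),
      IsComodHom Q ⟨G.obj B₀.pt, δ.app B₀.pt, coassoc B₀.pt⟩ h →
      h ≫ δ.app B₀.pt = h ≫ G.map B₀.co →
      ∃! q : Q.pt ⟶ B₀.pt, IsComodHom Q B₀ q ∧ q ≫ B₀.co = h)
    ↔ B₀.co ≫ ε.app B₀.pt = 𝟙 B₀.pt := by
  have εnat : ∀ {X Y : B} (f : X ⟶ Y), G.map f ≫ ε.app Y = ε.app X ≫ f := by
    intro X Y f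
    simp [ε.naturality f]
  -- key computation: co ≫ ε ≫ co = co
  have key : B₀.co ≫ ε.app B₀.pt ≫ B₀.co = B₀.co := by
    rw [← εnat B₀.co, ← Category.assoc, B₀.coassoc, Category.assoc, counit₂,
      Category.comp_id]
  constructor
  · intro H
    obtain ⟨q, ⟨hq1, hq2⟩, huniq⟩ := H B₀ B₀.co B₀.coassoc B₀.coassoc.symm
    have h1 : B₀.co ≫ ε.app B₀.pt = q := by
      apply huniq
      constructor
      · show B₀.co ≫ G.map (B₀.co ≫ ε.app B₀.pt) = (B₀.co ≫ ε.app B₀.pt) ≫ B₀.co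
        rw [G.map_comp, ← Category.assoc, B₀.coassoc, Category.assoc, counit₁,
          Category.comp_id, Category.assoc, key]
      · rw [Category.assoc, key]
    have h2 : 𝟙 B₀.pt = q := by
      apply huniq
      exact ⟨by simp [IsComodHom], by simp⟩
    rw [h1, ← h2]
  · intro hcu Q h hhom heq
    refine ⟨h ≫ ε.app B₀.pt, ⟨?_, ?_⟩, ?_⟩
    · show Q.co ≫ G.map (h ≫ ε.app B₀.pt) = (h ≫ ε.app B₀.pt) ≫ B₀.co
      have : (h ≫ ε.app B₀.pt) ≫ B₀.co = h := by
        rw [Category.assoc, ← εnat B₀.co, ← Category.assoc, ← heq,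
          Category.assoc, counit₂, Category.comp_id]
      rw [this, G.map_comp, ← Category.assoc, hhom, Category.assoc, counit₁,
        Category.comp_id]
    · rw [Category.assoc, ← εnat B₀.co, ← Category.assoc, ← heq,
        Category.assoc, counit₂, Category.comp_id]
    · rintro q' ⟨_, hq2⟩
      rw [← hq2, Category.assoc, hcu, Category.comp_id]
end
end

section
/- If (F, m, η) is a proper monad, then a non-unital F-module (B, ϱ) (satisfying ϱ·F(ϱ) = ϱ·m_B) is firm if and only if it is unital, i.e., ϱ·η_B = id_B. -/
open CategoryTheory

universe v u

section

variable {B : Type u} [Category.{v} B]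

/-- A non-unital module over the pair `(F, m)`. -/
structure NUMod (F : B ⥤ B) (m : F ⋙ F ⟶ F) where
  pt : B
  act : F.obj pt ⟶ pt
  massoc : F.map act ≫ act = m.app pt ≫ act

/-- Morphism property in the category of non-unital `F`-modules. -/
def IsModHom {F : B ⥤ B} {m : F ⋙ F ⟶ F} (X Y : NUMod F m)
    (f : X.pt ⟶ Y.pt) : Prop :=
  F.map f ≫ Y.act = X.act ≫ f

/-
A unital module is firm because `η ≫ h` is the required factorisation of any `h`
coequalising `m` and `F ϱ`; it is unique since `q = (η ≫ ϱ) ≫ q = η ≫ h`.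
Conversely, `η ≫ ϱ` and `𝟙` both factor `ϱ` through itself as module maps,
so firmness forces them to be equal.
-/
namespace NUMod

variable {F : B ⥤ B} {m : F ⋙ F ⟶ F} (η : 𝟭 B ⟶ F)

theorem isModHom_id (M : NUMod F m) : IsModHom M M (𝟙 M.pt) := by
  simp [_root_.IsModHom]

theorem act_comp_unit_comp
    (unit₂ : ∀ X : B, η.app (F.obj X) ≫ m.app X = 𝟙 (F.obj X))
    (M : NUMod F m) {Y : B} (g : F.obj M.pt ⟶ Y)
    (hg : m.app M.pt ≫ g = F.map M.act ≫ g) :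
    M.act ≫ η.app M.pt ≫ g = g := by
  have nat : M.act ≫ η.app M.pt = η.app (F.obj M.pt) ≫ F.map M.act := η.naturality M.act
  rw [← Category.assoc, nat, Category.assoc, ← hg,
    ← Category.assoc, unit₂, Category.id_comp]

theorem map_unit_comp_comp_act
    (unit₁ : ∀ X : B, F.map (η.app X) ≫ m.app X = 𝟙 (F.obj X))
    {X : B} (Q : NUMod F m) (h : F.obj X ⟶ Q.pt)
    (hh : F.map h ≫ Q.act = m.app X ≫ h) :
    F.map (η.app X ≫ h) ≫ Q.act = h := by
  rw [F.map_comp, Category.assoc, hh, ← Category.assoc, unit₁]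
  exact Category.id_comp h

theorem isModHom_unit_comp
    (unit₁ : ∀ X : B, F.map (η.app X) ≫ m.app X = 𝟙 (F.obj X))
    (unit₂ : ∀ X : B, η.app (F.obj X) ≫ m.app X = 𝟙 (F.obj X))
    (M Q : NUMod F m) (h : F.obj M.pt ⟶ Q.pt)
    (hh : F.map h ≫ Q.act = m.app M.pt ≫ h)
    (hcoeq : m.app M.pt ≫ h = F.map M.act ≫ h) :
    IsModHom M Q (η.app M.pt ≫ h) := by
  rw [_root_.IsModHom, map_unit_comp_comp_act η unit₁ Q h hh,
    act_comp_unit_comp η unit₂ M h hcoeq]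

end NUMod

open NUMod in
/-- For a proper monad `(F,m,η)`, a non-unital `F`-module is firm
(its defining fork is a coequaliser in non-unital modules) iff it is unital. -/
theorem monad_firm_iff_unital
    (F : B ⥤ B) (m : F ⋙ F ⟶ F) (η : 𝟭 B ⟶ F)
    (massoc : ∀ X : B, F.map (m.app X) ≫ m.app X = m.app (F.obj X) ≫ m.app X)
    (unit₁ : ∀ X : B, F.map (η.app X) ≫ m.app X = 𝟙 (F.obj X))
    (unit₂ : ∀ X : B, η.app (F.obj X) ≫ m.app X = 𝟙 (F.obj X))
    (B₀ : NUMod F m) :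
    (∀ (Q : NUMod F m) (h : F.obj B₀.pt ⟶ Q.pt),
      IsModHom ⟨F.obj B₀.pt, m.app B₀.pt, massoc B₀.pt⟩ Q h →
      m.app B₀.pt ≫ h = F.map B₀.act ≫ h →
      ∃! q : B₀.pt ⟶ Q.pt, IsModHom B₀ Q q ∧ B₀.act ≫ q = h)
    ↔ η.app B₀.pt ≫ B₀.act = 𝟙 B₀.pt := by
  constructor
  · intro firm
    have hcoeq := B₀.massoc.symm
    obtain ⟨q, -, huniq⟩ := firm B₀ B₀.act B₀.massoc hcoeq
    have unit_eq : η.app B₀.pt ≫ B₀.act = q :=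
      huniq _ ⟨isModHom_unit_comp η unit₁ unit₂ B₀ B₀ _ B₀.massoc hcoeq,
        act_comp_unit_comp η unit₂ B₀ _ hcoeq⟩
    have id_eq : 𝟙 B₀.pt = q := huniq _ ⟨isModHom_id B₀, Category.comp_id _⟩
    rw [unit_eq, id_eq]
  · intro unital Q h hh hcoeq
    refine ⟨η.app B₀.pt ≫ h, ⟨isModHom_unit_comp η unit₁ unit₂ B₀ Q h hh hcoeq,
      act_comp_unit_comp η unit₂ B₀ h hcoeq⟩, ?_⟩
    rintro q ⟨-, rfl⟩
    rw [← Category.assoc, unital, Category.id_comp]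

end
end

section
/- Let η: I_A → RL and ε̃: RL → I_A be natural transformations with ε̃·η = id, and let (B, ϱ, ω) be a Frobenius LR-bimodule. Then ϱ·ω·ϱ = ϱ and ω·ϱ·ω = ω; consequently, if ϱ is an epimorphism in the category of non-counital LR-comodules or ω is a monomorphism in the category of non-unital LR-modules, then ϱ·ω = id_B. -/
open CategoryTheory

universe v₁ u₁ v₂ u₂

section

variable {A : Type u₁} [Category.{v₁} A] {B : Type u₂} [Category.{v₂} B]

/-- A non-counital comodule over the comonad `(LR, LηR)`. -/
structure LRComod (L : A ⥤ B) (R : B ⥤ A) (η : 𝟭 A ⟶ L ⋙ R) where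
  pt : B
  co : pt ⟶ L.obj (R.obj pt)
  coassoc : co ≫ L.map (R.map co) = co ≫ L.map (η.app (R.obj pt))

/-- A non-unital module over the monad `(LR, Lε̃R)`. -/
structure LRMod (L : A ⥤ B) (R : B ⥤ A) (εt : L ⋙ R ⟶ 𝟭 A) where
  pt : B
  act : L.obj (R.obj pt) ⟶ pt
  massoc : L.map (R.map act) ≫ act = L.map (εt.app (R.obj pt)) ≫ act

def IsLRComodHom {L : A ⥤ B} {R : B ⥤ A} {η : 𝟭 A ⟶ L ⋙ R}
    (X Y : LRComod L R η) (f : X.pt ⟶ Y.pt) : Prop :=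
  X.co ≫ L.map (R.map f) = f ≫ Y.co

def IsLRModHom {L : A ⥤ B} {R : B ⥤ A} {εt : L ⋙ R ⟶ 𝟭 A}
    (X Y : LRMod L R εt) (f : X.pt ⟶ Y.pt) : Prop :=
  L.map (R.map f) ≫ Y.act = X.act ≫ f

/-- If `ε̃·η = id` then for any Frobenius `LR`-bimodule
`(B₀, ϱ, ω)` one has `ϱ·ω·ϱ = ϱ` and `ω·ϱ·ω = ω`; consequently, if `ϱ` is epi
in non-counital `LR`-comodules or `ω` is mono in non-unital `LR`-modules, then
`ϱ·ω = id`. -/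
theorem frobenius_bimodule_split
    (L : A ⥤ B) (R : B ⥤ A) (η : 𝟭 A ⟶ L ⋙ R) (εt : L ⋙ R ⟶ 𝟭 A)
    (sep : ∀ X : A, η.app X ≫ εt.app X = 𝟙 X)
    (B₀ : B) (ϱ : L.obj (R.obj B₀) ⟶ B₀) (ω : B₀ ⟶ L.obj (R.obj B₀))
    (hmod : L.map (R.map ϱ) ≫ ϱ = L.map (εt.app (R.obj B₀)) ≫ ϱ)
    (hcom : ω ≫ L.map (R.map ω) = ω ≫ L.map (η.app (R.obj B₀)))
    (hfrob₁ : L.map (η.app (R.obj B₀)) ≫ L.map (R.map ϱ) = ϱ ≫ ω)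
    (hfrob₂ : L.map (R.map ω) ≫ L.map (εt.app (R.obj B₀)) = ϱ ≫ ω) :
    (ϱ ≫ ω ≫ ϱ = ϱ) ∧ (ω ≫ ϱ ≫ ω = ω) ∧
    ((∀ (Q : LRComod L R η) (g h : B₀ ⟶ Q.pt),
        IsLRComodHom ⟨B₀, ω, hcom⟩ Q g → IsLRComodHom ⟨B₀, ω, hcom⟩ Q h →
        ϱ ≫ g = ϱ ≫ h → g = h) →
      ω ≫ ϱ = 𝟙 B₀) ∧
    ((∀ (Q : LRMod L R εt) (g h : Q.pt ⟶ B₀),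
        IsLRModHom Q ⟨B₀, ϱ, hmod⟩ g → IsLRModHom Q ⟨B₀, ϱ, hmod⟩ h →
        g ≫ ω = h ≫ ω → g = h) →
      ω ≫ ϱ = 𝟙 B₀) := by
  have h1 : ϱ ≫ ω ≫ ϱ = ϱ := by
    rw [← Category.assoc, ← hfrob₁, Category.assoc, hmod, ← Category.assoc,
      ← L.map_comp, sep]
    simp
  have h2 : ω ≫ ϱ ≫ ω = ω := by
    rw [← hfrob₂, ← Category.assoc, hcom, Category.assoc, ← L.map_comp, sep]
    simp
  refine ⟨h1, h2, ?_, ?_⟩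
  · intro hepi
    refine hepi ⟨B₀, ω, hcom⟩ (ω ≫ ϱ) (𝟙 B₀) ?_ ?_ ?_
    · show ω ≫ L.map (R.map (ω ≫ ϱ)) = (ω ≫ ϱ) ≫ ω
      rw [R.map_comp, L.map_comp, ← Category.assoc, hcom, Category.assoc,
        hfrob₁]
      simp
    · show ω ≫ L.map (R.map (𝟙 B₀)) = 𝟙 B₀ ≫ ω
      simp
    · simpa using h1
  · intro hmono
    refine hmono ⟨B₀, ϱ, hmod⟩ (ω ≫ ϱ) (𝟙 B₀) ?_ ?_ ?_
    · show L.map (R.map (ω ≫ ϱ)) ≫ ϱ = ϱ ≫ ω ≫ ϱ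
      rw [R.map_comp, L.map_comp, Category.assoc, hmod, ← Category.assoc,
        hfrob₂]
      simp
    · show L.map (R.map (𝟙 B₀)) ≫ ϱ = ϱ ≫ 𝟙 B₀
      simp
    · simpa using h2

end
end

section
/- Let η: I_A → RL and ε̃: RL → I_A be natural transformations such that η·ε̃·η = η or ε̃·η·ε̃ = ε̃, and let (B, ϱ, ω) be a Frobenius LR-bimodule. Then ω·ϱ: LR(B) → LR(B) is idempotent. -/
open CategoryTheory

universe v₁ u₁ v₂ u₂

/-- If `η·ε̃·η = η` or `ε̃·η·ε̃ = ε̃`, then for any Frobenius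
`LR`-bimodule `(B₀, ϱ, ω)` the endomorphism `ω·ϱ : LR(B₀) → LR(B₀)` is
idempotent. -/
theorem frobenius_bimodule_omega_rho_idempotent
    {A : Type u₁} [Category.{v₁} A] {B : Type u₂} [Category.{v₂} B]
    (L : A ⥤ B) (R : B ⥤ A) (η : 𝟭 A ⟶ L ⋙ R) (εt : L ⋙ R ⟶ 𝟭 A)
    (hreg : (∀ X : A, η.app X ≫ εt.app X ≫ η.app X = η.app X) ∨
            (∀ X : A, εt.app X ≫ η.app X ≫ εt.app X = εt.app X))
    (B₀ : B) (ϱ : L.obj (R.obj B₀) ⟶ B₀) (ω : B₀ ⟶ L.obj (R.obj B₀))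
    (hmod : L.map (R.map ϱ) ≫ ϱ = L.map (εt.app (R.obj B₀)) ≫ ϱ)
    (hcom : ω ≫ L.map (R.map ω) = ω ≫ L.map (η.app (R.obj B₀)))
    (hfrob₁ : L.map (η.app (R.obj B₀)) ≫ L.map (R.map ϱ) = ϱ ≫ ω)
    (hfrob₂ : L.map (R.map ω) ≫ L.map (εt.app (R.obj B₀)) = ϱ ≫ ω) :
    (ϱ ≫ ω) ≫ (ϱ ≫ ω) = ϱ ≫ ω := by
  rcases hreg with h | h
  · calc (ϱ ≫ ω) ≫ (ϱ ≫ ω)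
        = (L.map (η.app (R.obj B₀)) ≫ L.map (R.map ϱ)) ≫ ϱ ≫ ω := by rw [hfrob₁]
      _ = L.map (η.app (R.obj B₀)) ≫ (L.map (R.map ϱ) ≫ ϱ) ≫ ω := by simp
      _ = L.map (η.app (R.obj B₀)) ≫ (L.map (εt.app (R.obj B₀)) ≫ ϱ) ≫ ω := by rw [hmod]
      _ = L.map (η.app (R.obj B₀)) ≫ L.map (εt.app (R.obj B₀)) ≫
            L.map (η.app (R.obj B₀)) ≫ L.map (R.map ϱ) := by rw [hfrob₁]; simp
      _ = L.map (η.app (R.obj B₀) ≫ εt.app (R.obj B₀) ≫ η.app (R.obj B₀)) ≫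
            L.map (R.map ϱ) := by simp
      _ = L.map (η.app (R.obj B₀)) ≫ L.map (R.map ϱ) := by rw [h]
      _ = ϱ ≫ ω := hfrob₁
  · calc (ϱ ≫ ω) ≫ (ϱ ≫ ω)
        = ϱ ≫ ω ≫ L.map (R.map ω) ≫ L.map (εt.app (R.obj B₀)) := by rw [hfrob₂]; simp
      _ = ϱ ≫ (ω ≫ L.map (R.map ω)) ≫ L.map (εt.app (R.obj B₀)) := by simp
      _ = ϱ ≫ (ω ≫ L.map (η.app (R.obj B₀))) ≫ L.map (εt.app (R.obj B₀)) := by rw [hcom]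
      _ = (ϱ ≫ ω) ≫ L.map (η.app (R.obj B₀)) ≫ L.map (εt.app (R.obj B₀)) := by simp
      _ = (L.map (R.map ω) ≫ L.map (εt.app (R.obj B₀))) ≫
            L.map (η.app (R.obj B₀)) ≫ L.map (εt.app (R.obj B₀)) := by rw [hfrob₂]
      _ = L.map (R.map ω) ≫
            L.map (εt.app (R.obj B₀) ≫ η.app (R.obj B₀) ≫ εt.app (R.obj B₀)) := by simp
      _ = L.map (R.map ω) ≫ L.map (εt.app (R.obj B₀)) := by rw [h]
      _ = ϱ ≫ ω := hfrob₂
end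

section
/- Let η: I_A → RL and ε̃: RL → I_A be natural transformations, and θ := Lε̃R · LηR : LR → LR. Let K be an ideal class of LR-comodule morphisms containing Lε̃_{R(B)} for each B. If (B, ω) is a K-cofirm non-counital LR-comodule, then there exists a unique ϱ: LR(B) → B in K making (B, ϱ, ω) a Frobenius bimodule; moreover, any LR-comodule morphism between two K-cofirm comodules is automatically a morphism of the induced Frobenius bimodules. -/
open CategoryTheory

universe v₁ u₁ v₂ u₂

section

variable {A : Type u₁} [Category.{v₁} A] {B : Type u₂} [Category.{v₂} B]

/-- The cofree comodule `(LR(X), LηR_X)`. -/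
def cofreeLR (L : A ⥤ B) (R : B ⥤ A) (η : 𝟭 A ⟶ L ⋙ R) (X : B) : LRComod L R η where
  pt := L.obj (R.obj X)
  co := L.map (η.app (R.obj X))
  coassoc := by
    rw [← L.map_comp, ← L.map_comp]
    congr 1
    have h := η.naturality (η.app (R.obj X))
    simp only [Functor.id_map, Functor.comp_map] at h
    exact h.symm

/-! The coaction `ω` of a `K`-cofirm comodule is a `K`-equaliser of `LηR` and `LR(ω)`, and
`Lε̃R · LR(ω)` is a comodule morphism in `K` which equalises this pair (naturality of `ε̃` and
coassociativity). So it factors uniquely as `ω · ϱ`: this is the second Frobenius condition, and the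
factorisation being a comodule morphism is the first. Every further identity (associativity of
`ϱ`, compatibility with comodule morphisms) is checked after composing with `ω`, which cancels from
comodule morphisms in `K`, and there it is again naturality of `ε̃`. -/

section Frobenius

variable {L : A ⥤ B} {R : B ⥤ A} {η : 𝟭 A ⟶ L ⋙ R}

def IsIdealClass (K : ∀ X Y : LRComod L R η, (X.pt ⟶ Y.pt) → Prop) : Prop :=
  ∀ (X Y Z : LRComod L R η) (f : X.pt ⟶ Y.pt) (g : Y.pt ⟶ Z.pt),
    IsLRComodHom X Y f → IsLRComodHom Y Z g → (K X Y f ∨ K Y Z g) → K X Z (f ≫ g)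

def IsCofirm (K : ∀ X Y : LRComod L R η, (X.pt ⟶ Y.pt) → Prop) (X : LRComod L R η) : Prop :=
  K X (cofreeLR L R η X.pt) X.co ∧
    ∀ (Q : LRComod L R η) (h : Q.pt ⟶ L.obj (R.obj X.pt)),
      IsLRComodHom Q (cofreeLR L R η X.pt) h →
      K Q (cofreeLR L R η X.pt) h →
      h ≫ L.map (η.app (R.obj X.pt)) = h ≫ L.map (R.map X.co) →
      ∃ q : Q.pt ⟶ X.pt,
        (IsLRComodHom Q X q ∧ K Q X q ∧ q ≫ X.co = h) ∧
        ∀ q', (IsLRComodHom Q X q' ∧ K Q X q' ∧ q' ≫ X.co = h) → q' = q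

-- The first Frobenius condition `LR(ϱ) · LηR = ω · ϱ` is written as: `ϱ` is a comodule morphism
-- out of the cofree comodule.
def IsFrobeniusAction (εt : L ⋙ R ⟶ 𝟭 A) (X : LRComod L R η) (ϱ : L.obj (R.obj X.pt) ⟶ X.pt) :
    Prop :=
  IsLRComodHom (cofreeLR L R η X.pt) X ϱ ∧
    L.map (R.map X.co) ≫ L.map (εt.app (R.obj X.pt)) = ϱ ≫ X.co

theorem IsIdealClass.comp_of_left {K : ∀ X Y : LRComod L R η, (X.pt ⟶ Y.pt) → Prop}
    (hK : IsIdealClass K) {X Y Z : LRComod L R η} {f : X.pt ⟶ Y.pt} {g : Y.pt ⟶ Z.pt}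
    (hf : IsLRComodHom X Y f) (hg : IsLRComodHom Y Z g) (kf : K X Y f) : K X Z (f ≫ g) :=
  hK X Y Z f g hf hg (Or.inl kf)

theorem IsIdealClass.comp_of_right {K : ∀ X Y : LRComod L R η, (X.pt ⟶ Y.pt) → Prop}
    (hK : IsIdealClass K) {X Y Z : LRComod L R η} {f : X.pt ⟶ Y.pt} {g : Y.pt ⟶ Z.pt}
    (hf : IsLRComodHom X Y f) (hg : IsLRComodHom Y Z g) (kg : K Y Z g) : K X Z (f ≫ g) :=
  hK X Y Z f g hf hg (Or.inr kg)

theorem IsLRComodHom.comp {X Y Z : LRComod L R η} {f : X.pt ⟶ Y.pt} {g : Y.pt ⟶ Z.pt}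
    (hf : IsLRComodHom X Y f) (hg : IsLRComodHom Y Z g) : IsLRComodHom X Z (f ≫ g) := by
  unfold IsLRComodHom at *
  rw [R.map_comp, L.map_comp, reassoc_of% hf, hg, Category.assoc]

theorem LRComod.isLRComodHom_co (X : LRComod L R η) :
    IsLRComodHom X (cofreeLR L R η X.pt) X.co :=
  X.coassoc

theorem isLRComodHom_cofreeLR_map {X Y : B} (g : R.obj X ⟶ R.obj Y) :
    IsLRComodHom (cofreeLR L R η X) (cofreeLR L R η Y) (L.map g) := by
  change L.map _ ≫ L.map (R.map (L.map g)) = L.map g ≫ L.map _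
  simp only [← L.map_comp]
  exact congrArg L.map (η.naturality g).symm

theorem map_comp_map_comp_app (εt : L ⋙ R ⟶ 𝟭 A) {Y : B} {Z W : A} (u : Y ⟶ L.obj Z)
    (g : Z ⟶ W) : R.map (u ≫ L.map g) ≫ εt.app W = R.map u ≫ εt.app Z ≫ g := by
  rw [R.map_comp, Category.assoc]
  exact congrArg (R.map u ≫ ·) (εt.naturality g)

variable (εt : L ⋙ R ⟶ 𝟭 A)

theorem LRComod.map_co_map_εt_equalizes (X : LRComod L R η) :
    (L.map (R.map X.co) ≫ L.map (εt.app (R.obj X.pt))) ≫ L.map (η.app (R.obj X.pt)) =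
      (L.map (R.map X.co) ≫ L.map (εt.app (R.obj X.pt))) ≫ L.map (R.map X.co) := by
  simp only [← L.map_comp, Category.assoc]
  rw [← map_comp_map_comp_app, ← X.coassoc]
  exact congrArg L.map (map_comp_map_comp_app εt _ _)

theorem assoc_comp_co_of_frobenius {X : LRComod L R η} {ϱ : L.obj (R.obj X.pt) ⟶ X.pt}
    (hϱ : L.map (R.map X.co) ≫ L.map (εt.app (R.obj X.pt)) = ϱ ≫ X.co) :
    (L.map (R.map ϱ) ≫ ϱ) ≫ X.co = (L.map (εt.app (R.obj X.pt)) ≫ ϱ) ≫ X.co := by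
  simp only [Category.assoc, ← hϱ, ← L.map_comp]
  rw [← Category.assoc, ← R.map_comp, ← hϱ, ← L.map_comp]
  exact congrArg L.map (εt.naturality _)

theorem naturality_comp_co_of_frobenius {X Y : LRComod L R η} {ϱX : L.obj (R.obj X.pt) ⟶ X.pt}
    {ϱY : L.obj (R.obj Y.pt) ⟶ Y.pt}
    (hϱX : L.map (R.map X.co) ≫ L.map (εt.app (R.obj X.pt)) = ϱX ≫ X.co)
    (hϱY : L.map (R.map Y.co) ≫ L.map (εt.app (R.obj Y.pt)) = ϱY ≫ Y.co)
    {h : X.pt ⟶ Y.pt} (hh : IsLRComodHom X Y h) :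
    (L.map (R.map h) ≫ ϱY) ≫ Y.co = (ϱX ≫ h) ≫ Y.co := by
  rw [Category.assoc, ← hϱY, Category.assoc, ← hh, ← reassoc_of% hϱX]
  simp only [← L.map_comp]
  rw [← R.map_comp_assoc, hh.symm, map_comp_map_comp_app]

variable {K : ∀ X Y : LRComod L R η, (X.pt ⟶ Y.pt) → Prop}

theorem IsCofirm.hom_ext (hK : IsIdealClass K) {X : LRComod L R η} (hX : IsCofirm K X)
    {Q : LRComod L R η} {q₁ q₂ : Q.pt ⟶ X.pt} (hq₁ : IsLRComodHom Q X q₁)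
    (hq₂ : IsLRComodHom Q X q₂) (kq₁ : K Q X q₁) (kq₂ : K Q X q₂)
    (e : q₁ ≫ X.co = q₂ ≫ X.co) : q₁ = q₂ := by
  have hco := X.isLRComodHom_co
  obtain ⟨q, -, hq⟩ := hX.2 Q (q₁ ≫ X.co) (hq₁.comp hco) (hK.comp_of_left hq₁ hco kq₁)
    (by rw [Category.assoc, Category.assoc, X.coassoc])
  rw [hq q₁ ⟨hq₁, kq₁, rfl⟩, hq q₂ ⟨hq₂, kq₂, e.symm⟩]

theorem IsCofirm.existsUnique_frobeniusAction (hK : IsIdealClass K)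
    (hKεt : ∀ Y : B,
      K (cofreeLR L R η (L.obj (R.obj Y))) (cofreeLR L R η Y) (L.map (εt.app (R.obj Y))))
    {X : LRComod L R η} (hX : IsCofirm K X) :
    ∃! ϱ : L.obj (R.obj X.pt) ⟶ X.pt, K (cofreeLR L R η X.pt) X ϱ ∧
      L.map (R.map ϱ) ≫ ϱ = L.map (εt.app (R.obj X.pt)) ≫ ϱ ∧ IsFrobeniusAction εt X ϱ := by
  have hθ := (isLRComodHom_cofreeLR_map (R.map X.co)).comp
    (isLRComodHom_cofreeLR_map (η := η) (εt.app (R.obj X.pt)))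
  obtain ⟨ϱ, ⟨hϱ, kϱ, hϱco⟩, hϱ_unique⟩ := hX.2 (cofreeLR L R η X.pt) _ hθ
    (hK.comp_of_right (isLRComodHom_cofreeLR_map _) (isLRComodHom_cofreeLR_map _) (hKεt _))
    (X.map_co_map_εt_equalizes εt)
  refine ⟨ϱ, ⟨kϱ, ?_, hϱ, hϱco.symm⟩,
    fun ϱ' ⟨kϱ', _, hϱ', hϱ'co⟩ => hϱ_unique ϱ' ⟨hϱ', kϱ', hϱ'co.symm⟩⟩
  have hRϱ := isLRComodHom_cofreeLR_map (η := η) (R.map ϱ)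
  have hεt := isLRComodHom_cofreeLR_map (η := η) (εt.app (R.obj X.pt))
  exact hX.hom_ext hK (hRϱ.comp hϱ) (hεt.comp hϱ) (hK.comp_of_right hRϱ hϱ kϱ)
    (hK.comp_of_right hεt hϱ kϱ) (assoc_comp_co_of_frobenius εt hϱco.symm)

theorem IsCofirm.map_map_comp_frobeniusAction (hK : IsIdealClass K) {X Y : LRComod L R η}
    (hY : IsCofirm K Y) {ϱX : L.obj (R.obj X.pt) ⟶ X.pt} {ϱY : L.obj (R.obj Y.pt) ⟶ Y.pt}
    (kϱX : K (cofreeLR L R η X.pt) X ϱX) (hϱX : IsFrobeniusAction εt X ϱX)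
    (kϱY : K (cofreeLR L R η Y.pt) Y ϱY) (hϱY : IsFrobeniusAction εt Y ϱY)
    {h : X.pt ⟶ Y.pt} (hh : IsLRComodHom X Y h) : L.map (R.map h) ≫ ϱY = ϱX ≫ h :=
  hY.hom_ext hK ((isLRComodHom_cofreeLR_map _).comp hϱY.1) (hϱX.1.comp hh)
    (hK.comp_of_right (isLRComodHom_cofreeLR_map _) hϱY.1 kϱY)
    (hK.comp_of_left hϱX.1 hh kϱX) (naturality_comp_co_of_frobenius εt hϱX.2 hϱY.2 hh)

end Frobenius

/-- Given `η : I → RL`, `ε̃ : RL → I` and an ideal class `K` of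
`LR`-comodule morphisms containing each `Lε̃_{R(X)}`, every `K`-cofirm
non-counital `LR`-comodule extends by a unique `ϱ` in `K` to a Frobenius
bimodule, and comodule morphisms between `K`-cofirm comodules are morphisms of
the induced Frobenius bimodules. -/
theorem cofirm_comodule_extends_to_frobenius
    (L : A ⥤ B) (R : B ⥤ A) (η : 𝟭 A ⟶ L ⋙ R) (εt : L ⋙ R ⟶ 𝟭 A)
    (K : ∀ X Y : LRComod L R η, (X.pt ⟶ Y.pt) → Prop)
    (Kideal : ∀ (X Y Z : LRComod L R η) (f : X.pt ⟶ Y.pt) (g : Y.pt ⟶ Z.pt),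
      IsLRComodHom X Y f → IsLRComodHom Y Z g → (K X Y f ∨ K Y Z g) → K X Z (f ≫ g))
    (Kεt : ∀ X : B,
      K (cofreeLR L R η (L.obj (R.obj X))) (cofreeLR L R η X) (L.map (εt.app (R.obj X)))) :
    -- (1) unique ϱ in K making a Frobenius bimodule
    (∀ B₀ : LRComod L R η,
      -- (B₀, B₀.co) is K-cofirm:
      (K B₀ (cofreeLR L R η B₀.pt) B₀.co ∧
        ∀ (Q : LRComod L R η) (h : Q.pt ⟶ L.obj (R.obj B₀.pt)),
          IsLRComodHom Q (cofreeLR L R η B₀.pt) h →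
          K Q (cofreeLR L R η B₀.pt) h →
          h ≫ L.map (η.app (R.obj B₀.pt)) = h ≫ L.map (R.map B₀.co) →
          ∃ q : Q.pt ⟶ B₀.pt,
            (IsLRComodHom Q B₀ q ∧ K Q B₀ q ∧ q ≫ B₀.co = h) ∧
            ∀ q', (IsLRComodHom Q B₀ q' ∧ K Q B₀ q' ∧ q' ≫ B₀.co = h) → q' = q) →
      ∃ ϱ : L.obj (R.obj B₀.pt) ⟶ B₀.pt,
        (K (cofreeLR L R η B₀.pt) B₀ ϱ ∧
          L.map (R.map ϱ) ≫ ϱ = L.map (εt.app (R.obj B₀.pt)) ≫ ϱ ∧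
          L.map (η.app (R.obj B₀.pt)) ≫ L.map (R.map ϱ) = ϱ ≫ B₀.co ∧
          L.map (R.map B₀.co) ≫ L.map (εt.app (R.obj B₀.pt)) = ϱ ≫ B₀.co) ∧
        ∀ ϱ', (K (cofreeLR L R η B₀.pt) B₀ ϱ' ∧
          L.map (R.map ϱ') ≫ ϱ' = L.map (εt.app (R.obj B₀.pt)) ≫ ϱ' ∧
          L.map (η.app (R.obj B₀.pt)) ≫ L.map (R.map ϱ') = ϱ' ≫ B₀.co ∧
          L.map (R.map B₀.co) ≫ L.map (εt.app (R.obj B₀.pt)) = ϱ' ≫ B₀.co) → ϱ' = ϱ) ∧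
    -- (2) comodule morphisms between K-cofirm comodules are bimodule morphisms
    (∀ (B₀ B₁ : LRComod L R η)
      (ϱ₀ : L.obj (R.obj B₀.pt) ⟶ B₀.pt) (ϱ₁ : L.obj (R.obj B₁.pt) ⟶ B₁.pt),
      (K B₀ (cofreeLR L R η B₀.pt) B₀.co ∧
        ∀ (Q : LRComod L R η) (h : Q.pt ⟶ L.obj (R.obj B₀.pt)),
          IsLRComodHom Q (cofreeLR L R η B₀.pt) h →
          K Q (cofreeLR L R η B₀.pt) h →
          h ≫ L.map (η.app (R.obj B₀.pt)) = h ≫ L.map (R.map B₀.co) →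
          ∃ q : Q.pt ⟶ B₀.pt,
            (IsLRComodHom Q B₀ q ∧ K Q B₀ q ∧ q ≫ B₀.co = h) ∧
            ∀ q', (IsLRComodHom Q B₀ q' ∧ K Q B₀ q' ∧ q' ≫ B₀.co = h) → q' = q) →
      (K B₁ (cofreeLR L R η B₁.pt) B₁.co ∧
        ∀ (Q : LRComod L R η) (h : Q.pt ⟶ L.obj (R.obj B₁.pt)),
          IsLRComodHom Q (cofreeLR L R η B₁.pt) h →
          K Q (cofreeLR L R η B₁.pt) h →
          h ≫ L.map (η.app (R.obj B₁.pt)) = h ≫ L.map (R.map B₁.co) →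
          ∃ q : Q.pt ⟶ B₁.pt,
            (IsLRComodHom Q B₁ q ∧ K Q B₁ q ∧ q ≫ B₁.co = h) ∧
            ∀ q', (IsLRComodHom Q B₁ q' ∧ K Q B₁ q' ∧ q' ≫ B₁.co = h) → q' = q) →
      (K (cofreeLR L R η B₀.pt) B₀ ϱ₀ ∧
        L.map (η.app (R.obj B₀.pt)) ≫ L.map (R.map ϱ₀) = ϱ₀ ≫ B₀.co ∧
        L.map (R.map B₀.co) ≫ L.map (εt.app (R.obj B₀.pt)) = ϱ₀ ≫ B₀.co) →
      (K (cofreeLR L R η B₁.pt) B₁ ϱ₁ ∧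
        L.map (η.app (R.obj B₁.pt)) ≫ L.map (R.map ϱ₁) = ϱ₁ ≫ B₁.co ∧
        L.map (R.map B₁.co) ≫ L.map (εt.app (R.obj B₁.pt)) = ϱ₁ ≫ B₁.co) →
      ∀ h : B₀.pt ⟶ B₁.pt, IsLRComodHom B₀ B₁ h →
        L.map (R.map h) ≫ ϱ₁ = ϱ₀ ≫ h) := by
  refine ⟨fun _ => IsCofirm.existsUnique_frobeniusAction εt Kideal Kεt, ?_⟩
  rintro B₀ B₁ ϱ₀ ϱ₁ - hB₁ ⟨kϱ₀, hϱ₀⟩ ⟨kϱ₁, hϱ₁⟩ h hh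
  exact IsCofirm.map_map_comp_frobeniusAction εt Kideal hB₁ kϱ₀ hϱ₀ kϱ₁ hϱ₁ hh

end
end

section
/- Let (F, m, η; δ, ε) be a (proper) Frobenius monad on B, i.e., (F, m, η) a monad, (F, δ, ε) a comonad, satisfying the Frobenius property. Then the category of unital F-modules, the category of counital F-comodules, and the category of unital-and-counital Frobenius F-bimodules are pairwise isomorphic, via (B, ϱ) ↦ (B, ϱ, F(ϱ)·δ_B·η_B) and (B, ω) ↦ (B, ε_B·m_B·F(ω), ω), with the forgetful functors as inverses. -/
/-!
For a module `ϱ`, the Frobenius laws turn `ω = Fϱ·δ·η` into a counital coassociative coaction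
satisfying both Frobenius compatibilities; dually a comodule `ω` yields the action
`ϱ = ε·m·Fω`. Conversely, in a unital-and-counital Frobenius bimodule the identity
`Fϱ·δ = ω·ϱ` precomposed with `η` gives `ω = Fϱ·δ·η`, and `m·Fω = ω·ϱ` postcomposed with `ε`
gives `ϱ = ε·m·Fω`: each structure determines the other, so the constructions are inverse to
the forgetful functors on the nose.
-/

open CategoryTheory

universe v u

section

variable {B : Type u} [Category.{v} B]

/-- A unital module over the monad `(F, m, η)`. -/
structure UMod (F : B ⥤ B) (m : F ⋙ F ⟶ F) (η : 𝟭 B ⟶ F) where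
  pt : B
  act : F.obj pt ⟶ pt
  massoc : F.map act ≫ act = m.app pt ≫ act
  unital : η.app pt ≫ act = 𝟙 pt

instance (F : B ⥤ B) (m : F ⋙ F ⟶ F) (η : 𝟭 B ⟶ F) : Category (UMod F m η) where
  Hom X Y := {f : X.pt ⟶ Y.pt // F.map f ≫ Y.act = X.act ≫ f}
  id X := ⟨𝟙 X.pt, by simp⟩
  comp {X Y Z} f g := ⟨f.1 ≫ g.1, by
    rw [F.map_comp, Category.assoc, g.2, ← Category.assoc, f.2, Category.assoc]⟩
  id_comp f := Subtype.ext (Category.id_comp f.1)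
  comp_id f := Subtype.ext (Category.comp_id f.1)
  assoc f g h := Subtype.ext (Category.assoc f.1 g.1 h.1)

/-- A counital comodule over the comonad `(F, δ, ε)`. -/
structure CComod (F : B ⥤ B) (δ : F ⟶ F ⋙ F) (ε : F ⟶ 𝟭 B) where
  pt : B
  co : pt ⟶ F.obj pt
  coassoc : co ≫ F.map co = co ≫ δ.app pt
  counital : co ≫ ε.app pt = 𝟙 pt

instance (F : B ⥤ B) (δ : F ⟶ F ⋙ F) (ε : F ⟶ 𝟭 B) : Category (CComod F δ ε) where
  Hom X Y := {f : X.pt ⟶ Y.pt // X.co ≫ F.map f = f ≫ Y.co}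
  id X := ⟨𝟙 X.pt, by simp⟩
  comp {X Y Z} f g := ⟨f.1 ≫ g.1, by
    rw [F.map_comp, ← Category.assoc, f.2, Category.assoc, g.2, ← Category.assoc]⟩
  id_comp f := Subtype.ext (Category.id_comp f.1)
  comp_id f := Subtype.ext (Category.comp_id f.1)
  assoc f g h := Subtype.ext (Category.assoc f.1 g.1 h.1)

/-- A unital-and-counital Frobenius `F`-bimodule. -/
structure UCFrobBimod (F : B ⥤ B) (m : F ⋙ F ⟶ F) (η : 𝟭 B ⟶ F)
    (δ : F ⟶ F ⋙ F) (ε : F ⟶ 𝟭 B) where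
  pt : B
  act : F.obj pt ⟶ pt
  co : pt ⟶ F.obj pt
  massoc : F.map act ≫ act = m.app pt ≫ act
  coassoc : co ≫ F.map co = co ≫ δ.app pt
  unital : η.app pt ≫ act = 𝟙 pt
  counital : co ≫ ε.app pt = 𝟙 pt
  frob₁ : δ.app pt ≫ F.map act = act ≫ co
  frob₂ : F.map co ≫ m.app pt = act ≫ co

instance (F : B ⥤ B) (m : F ⋙ F ⟶ F) (η : 𝟭 B ⟶ F) (δ : F ⟶ F ⋙ F) (ε : F ⟶ 𝟭 B) :
    Category (UCFrobBimod F m η δ ε) where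
  Hom X Y := {f : X.pt ⟶ Y.pt //
    F.map f ≫ Y.act = X.act ≫ f ∧ X.co ≫ F.map f = f ≫ Y.co}
  id X := ⟨𝟙 X.pt, by simp, by simp⟩
  comp {X Y Z} f g := ⟨f.1 ≫ g.1,
    by rw [F.map_comp, Category.assoc, g.2.1, ← Category.assoc, f.2.1, Category.assoc],
    by rw [F.map_comp, ← Category.assoc, f.2.2, Category.assoc, g.2.2, ← Category.assoc]⟩
  id_comp f := Subtype.ext (Category.id_comp f.1)
  comp_id f := Subtype.ext (Category.comp_id f.1)
  assoc f g h := Subtype.ext (Category.assoc f.1 g.1 h.1)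

/-- Forgetful functor to unital modules. -/
def forgetToUMod (F : B ⥤ B) (m : F ⋙ F ⟶ F) (η : 𝟭 B ⟶ F)
    (δ : F ⟶ F ⋙ F) (ε : F ⟶ 𝟭 B) : UCFrobBimod F m η δ ε ⥤ UMod F m η where
  obj X := ⟨X.pt, X.act, X.massoc, X.unital⟩
  map f := ⟨f.1, f.2.1⟩

/-- Forgetful functor to counital comodules. -/
def forgetToCComod (F : B ⥤ B) (m : F ⋙ F ⟶ F) (η : 𝟭 B ⟶ F)
    (δ : F ⟶ F ⋙ F) (ε : F ⟶ 𝟭 B) : UCFrobBimod F m η δ ε ⥤ CComod F δ ε where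
  obj X := ⟨X.pt, X.co, X.coassoc, X.counital⟩
  map f := ⟨f.1, f.2.2⟩


section ModuleToBimodule

variable {F : B ⥤ B} {m : F ⋙ F ⟶ F} {η : 𝟭 B ⟶ F}

def UMod.coaction (δ : F ⟶ F ⋙ F) (X : UMod F m η) : X.pt ⟶ F.obj X.pt :=
  η.app X.pt ≫ δ.app X.pt ≫ F.map X.act

variable {δ : F ⟶ F ⋙ F}

theorem UMod.frob₁_coaction
    (unit₂ : ∀ X : B, η.app (F.obj X) ≫ m.app X = 𝟙 (F.obj X))
    (frob₁ : ∀ X : B, m.app X ≫ δ.app X = δ.app (F.obj X) ≫ F.map (m.app X))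
    (X : UMod F m η) :
    δ.app X.pt ≫ F.map X.act = X.act ≫ X.coaction δ := by
  have hη := η.naturality X.act
  have hδ := δ.naturality X.act
  dsimp at hη hδ
  calc δ.app X.pt ≫ F.map X.act
      = η.app (F.obj X.pt) ≫ (m.app X.pt ≫ δ.app X.pt) ≫ F.map X.act := by
        rw [Category.assoc, reassoc_of% unit₂]
    _ = η.app (F.obj X.pt) ≫ δ.app (F.obj X.pt) ≫ F.map (F.map X.act ≫ X.act) := by
        rw [frob₁, X.massoc, F.map_comp, Category.assoc]
    _ = X.act ≫ X.coaction δ := by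
        rw [UMod.coaction, F.map_comp, reassoc_of% hη, reassoc_of% hδ]

theorem UMod.frob₂_coaction
    (unit₁ : ∀ X : B, F.map (η.app X) ≫ m.app X = 𝟙 (F.obj X))
    (unit₂ : ∀ X : B, η.app (F.obj X) ≫ m.app X = 𝟙 (F.obj X))
    (frob₁ : ∀ X : B, m.app X ≫ δ.app X = δ.app (F.obj X) ≫ F.map (m.app X))
    (frob₂ : ∀ X : B, m.app X ≫ δ.app X = F.map (δ.app X) ≫ m.app (F.obj X))
    (X : UMod F m η) :
    F.map (X.coaction δ) ≫ m.app X.pt = X.act ≫ X.coaction δ := by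
  have hm := m.naturality X.act
  dsimp at hm
  calc F.map (X.coaction δ) ≫ m.app X.pt
      = (F.map (η.app X.pt) ≫ m.app X.pt) ≫ δ.app X.pt ≫ F.map X.act := by
        simp [UMod.coaction, hm, reassoc_of% frob₂]
    _ = δ.app X.pt ≫ F.map X.act := by
        rw [unit₁]
        exact Category.id_comp _
    _ = X.act ≫ X.coaction δ := X.frob₁_coaction unit₂ frob₁

theorem UMod.coaction_coassoc
    (unit₂ : ∀ X : B, η.app (F.obj X) ≫ m.app X = 𝟙 (F.obj X))
    (coassoc : ∀ X : B, δ.app X ≫ F.map (δ.app X) = δ.app X ≫ δ.app (F.obj X))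
    (frob₁ : ∀ X : B, m.app X ≫ δ.app X = δ.app (F.obj X) ≫ F.map (m.app X))
    (X : UMod F m η) :
    X.coaction δ ≫ F.map (X.coaction δ) = X.coaction δ ≫ δ.app X.pt := by
  have hδ := δ.naturality X.act
  dsimp at hδ
  symm
  calc X.coaction δ ≫ δ.app X.pt
      = η.app X.pt ≫ (δ.app X.pt ≫ δ.app (F.obj X.pt)) ≫ F.map (F.map X.act) := by
        simp only [UMod.coaction, Category.assoc, hδ]
    _ = η.app X.pt ≫ δ.app X.pt ≫ F.map (δ.app X.pt ≫ F.map X.act) := by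
        rw [← coassoc, F.map_comp, Category.assoc]
    _ = X.coaction δ ≫ F.map (X.coaction δ) := by
        rw [X.frob₁_coaction unit₂ frob₁, F.map_comp]
        simp only [UMod.coaction, Category.assoc]

theorem UMod.coaction_counit {ε : F ⟶ 𝟭 B}
    (counit₂ : ∀ X : B, δ.app X ≫ ε.app (F.obj X) = 𝟙 (F.obj X))
    (X : UMod F m η) :
    X.coaction δ ≫ ε.app X.pt = 𝟙 X.pt := by
  have hε := ε.naturality X.act
  dsimp at hε
  rw [UMod.coaction, Category.assoc, Category.assoc, hε, reassoc_of% counit₂, X.unital]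

theorem UMod.coaction_naturality {X Y : UMod F m η} (f : X ⟶ Y) :
    X.coaction δ ≫ F.map f.1 = f.1 ≫ Y.coaction δ := by
  have hη := η.naturality f.1
  have hδ := δ.naturality f.1
  dsimp at hη hδ
  rw [UMod.coaction, UMod.coaction, reassoc_of% hη, reassoc_of% hδ, ← F.map_comp, f.2,
    F.map_comp, Category.assoc, Category.assoc]

def UMod.toFrobBimod {ε : F ⟶ 𝟭 B}
    (unit₁ : ∀ X : B, F.map (η.app X) ≫ m.app X = 𝟙 (F.obj X))
    (unit₂ : ∀ X : B, η.app (F.obj X) ≫ m.app X = 𝟙 (F.obj X))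
    (coassoc : ∀ X : B, δ.app X ≫ F.map (δ.app X) = δ.app X ≫ δ.app (F.obj X))
    (counit₂ : ∀ X : B, δ.app X ≫ ε.app (F.obj X) = 𝟙 (F.obj X))
    (frob₁ : ∀ X : B, m.app X ≫ δ.app X = δ.app (F.obj X) ≫ F.map (m.app X))
    (frob₂ : ∀ X : B, m.app X ≫ δ.app X = F.map (δ.app X) ≫ m.app (F.obj X)) :
    UMod F m η ⥤ UCFrobBimod F m η δ ε where
  obj X :=
    { X with
      co := X.coaction δ
      coassoc := X.coaction_coassoc unit₂ coassoc frob₁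
      counital := X.coaction_counit counit₂
      frob₁ := X.frob₁_coaction unit₂ frob₁
      frob₂ := X.frob₂_coaction unit₁ unit₂ frob₁ frob₂ }
  map f := ⟨f.1, f.2, UMod.coaction_naturality f⟩

end ModuleToBimodule

section ComoduleToBimodule

variable {F : B ⥤ B} {δ : F ⟶ F ⋙ F} {ε : F ⟶ 𝟭 B}

def CComod.action (m : F ⋙ F ⟶ F) (Y : CComod F δ ε) : F.obj Y.pt ⟶ Y.pt :=
  F.map Y.co ≫ m.app Y.pt ≫ ε.app Y.pt

variable {m : F ⋙ F ⟶ F}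

theorem CComod.frob₂_action
    (counit₂ : ∀ X : B, δ.app X ≫ ε.app (F.obj X) = 𝟙 (F.obj X))
    (frob₂ : ∀ X : B, m.app X ≫ δ.app X = F.map (δ.app X) ≫ m.app (F.obj X))
    (Y : CComod F δ ε) :
    F.map Y.co ≫ m.app Y.pt = Y.action m ≫ Y.co := by
  have hε := ε.naturality Y.co
  have hm := m.naturality Y.co
  dsimp at hε hm
  symm
  calc Y.action m ≫ Y.co
      = F.map (Y.co ≫ F.map Y.co) ≫ m.app (F.obj Y.pt) ≫ ε.app (F.obj Y.pt) := by
        rw [CComod.action, Category.assoc, Category.assoc, ← hε, ← reassoc_of% hm,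
          F.map_comp_assoc]
    _ = F.map Y.co ≫ (m.app Y.pt ≫ δ.app Y.pt) ≫ ε.app (F.obj Y.pt) := by
        rw [Y.coassoc, frob₂, F.map_comp_assoc, Category.assoc]
    _ = F.map Y.co ≫ m.app Y.pt := by
        rw [Category.assoc, counit₂, Category.comp_id]

theorem CComod.frob₁_action
    (counit₁ : ∀ X : B, δ.app X ≫ F.map (ε.app X) = 𝟙 (F.obj X))
    (counit₂ : ∀ X : B, δ.app X ≫ ε.app (F.obj X) = 𝟙 (F.obj X))
    (frob₁ : ∀ X : B, m.app X ≫ δ.app X = δ.app (F.obj X) ≫ F.map (m.app X))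
    (frob₂ : ∀ X : B, m.app X ≫ δ.app X = F.map (δ.app X) ≫ m.app (F.obj X))
    (Y : CComod F δ ε) :
    δ.app Y.pt ≫ F.map (Y.action m) = Y.action m ≫ Y.co := by
  have hδ := δ.naturality Y.co
  dsimp at hδ
  calc δ.app Y.pt ≫ F.map (Y.action m)
      = F.map Y.co ≫ (m.app Y.pt ≫ δ.app Y.pt) ≫ F.map (ε.app Y.pt) := by
        simp only [CComod.action, F.map_comp, frob₁, Category.assoc, reassoc_of% hδ]
    _ = F.map Y.co ≫ m.app Y.pt := by
        rw [Category.assoc, counit₁, Category.comp_id]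
    _ = Y.action m ≫ Y.co := Y.frob₂_action counit₂ frob₂

theorem CComod.action_assoc
    (massoc : ∀ X : B, F.map (m.app X) ≫ m.app X = m.app (F.obj X) ≫ m.app X)
    (counit₂ : ∀ X : B, δ.app X ≫ ε.app (F.obj X) = 𝟙 (F.obj X))
    (frob₂ : ∀ X : B, m.app X ≫ δ.app X = F.map (δ.app X) ≫ m.app (F.obj X))
    (Y : CComod F δ ε) :
    F.map (Y.action m) ≫ Y.action m = m.app Y.pt ≫ Y.action m := by
  have hm := m.naturality Y.co
  dsimp at hm
  symm
  calc m.app Y.pt ≫ Y.action m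
      = F.map (F.map Y.co) ≫ (m.app (F.obj Y.pt) ≫ m.app Y.pt) ≫ ε.app Y.pt := by
        simp only [CComod.action, Category.assoc, reassoc_of% hm]
    _ = F.map (F.map Y.co ≫ m.app Y.pt) ≫ m.app Y.pt ≫ ε.app Y.pt := by
        rw [← massoc, F.map_comp, Category.assoc, Category.assoc]
    _ = F.map (Y.action m) ≫ Y.action m := by
        rw [Y.frob₂_action counit₂ frob₂, F.map_comp]
        simp only [CComod.action, Category.assoc]

theorem CComod.action_unit {η : 𝟭 B ⟶ F}
    (unit₂ : ∀ X : B, η.app (F.obj X) ≫ m.app X = 𝟙 (F.obj X))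
    (Y : CComod F δ ε) :
    η.app Y.pt ≫ Y.action m = 𝟙 Y.pt := by
  have hη := η.naturality Y.co
  dsimp at hη
  rw [CComod.action, ← reassoc_of% hη, reassoc_of% unit₂, Y.counital]

theorem CComod.action_naturality {X Y : CComod F δ ε} (f : X ⟶ Y) :
    F.map f.1 ≫ Y.action m = X.action m ≫ f.1 := by
  have hm := m.naturality f.1
  have hε := ε.naturality f.1
  dsimp at hm hε
  rw [CComod.action, CComod.action, ← F.map_comp_assoc, ← f.2, F.map_comp_assoc,
    reassoc_of% hm, hε, Category.assoc, Category.assoc]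

def CComod.toFrobBimod {η : 𝟭 B ⟶ F}
    (massoc : ∀ X : B, F.map (m.app X) ≫ m.app X = m.app (F.obj X) ≫ m.app X)
    (unit₂ : ∀ X : B, η.app (F.obj X) ≫ m.app X = 𝟙 (F.obj X))
    (counit₁ : ∀ X : B, δ.app X ≫ F.map (ε.app X) = 𝟙 (F.obj X))
    (counit₂ : ∀ X : B, δ.app X ≫ ε.app (F.obj X) = 𝟙 (F.obj X))
    (frob₁ : ∀ X : B, m.app X ≫ δ.app X = δ.app (F.obj X) ≫ F.map (m.app X))
    (frob₂ : ∀ X : B, m.app X ≫ δ.app X = F.map (δ.app X) ≫ m.app (F.obj X)) :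
    CComod F δ ε ⥤ UCFrobBimod F m η δ ε where
  obj Y :=
    { Y with
      act := Y.action m
      massoc := Y.action_assoc massoc counit₂ frob₂
      unital := Y.action_unit unit₂
      frob₁ := Y.frob₁_action counit₁ counit₂ frob₁ frob₂
      frob₂ := Y.frob₂_action counit₂ frob₂ }
  map f := ⟨f.1, CComod.action_naturality f, f.2⟩

end ComoduleToBimodule

section Bimodule

variable {F : B ⥤ B} {m : F ⋙ F ⟶ F} {η : 𝟭 B ⟶ F} {δ : F ⟶ F ⋙ F} {ε : F ⟶ 𝟭 B}

attribute [ext] UCFrobBimod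

theorem UCFrobBimod.coaction_forgetToUMod (Z : UCFrobBimod F m η δ ε) :
    ((forgetToUMod F m η δ ε).obj Z).coaction δ = Z.co := by
  dsimp only [UMod.coaction, forgetToUMod]
  rw [Z.frob₁, ← Category.assoc, Z.unital, Category.id_comp]

theorem UCFrobBimod.action_forgetToCComod (Z : UCFrobBimod F m η δ ε) :
    ((forgetToCComod F m η δ ε).obj Z).action m = Z.act := by
  dsimp only [CComod.action, forgetToCComod]
  rw [← Category.assoc, Z.frob₂, Category.assoc, Z.counital, Category.comp_id]

theorem UCFrobBimod.eqToHom_val {Z W : UCFrobBimod F m η δ ε} (h : Z = W) :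
    (eqToHom h).1 = eqToHom (congrArg UCFrobBimod.pt h) := by
  subst h
  rfl

theorem UCFrobBimod.comp_val {X Y Z : UCFrobBimod F m η δ ε} (f : X ⟶ Y) (g : Y ⟶ Z) :
    (f ≫ g).1 = f.1 ≫ g.1 :=
  rfl

theorem forgetToUMod_comp_toFrobBimod
    (unit₁ : ∀ X : B, F.map (η.app X) ≫ m.app X = 𝟙 (F.obj X))
    (unit₂ : ∀ X : B, η.app (F.obj X) ≫ m.app X = 𝟙 (F.obj X))
    (coassoc : ∀ X : B, δ.app X ≫ F.map (δ.app X) = δ.app X ≫ δ.app (F.obj X))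
    (counit₂ : ∀ X : B, δ.app X ≫ ε.app (F.obj X) = 𝟙 (F.obj X))
    (frob₁ : ∀ X : B, m.app X ≫ δ.app X = δ.app (F.obj X) ≫ F.map (m.app X))
    (frob₂ : ∀ X : B, m.app X ≫ δ.app X = F.map (δ.app X) ≫ m.app (F.obj X)) :
    forgetToUMod F m η δ ε ⋙ UMod.toFrobBimod unit₁ unit₂ coassoc counit₂ frob₁ frob₂ =
      𝟭 (UCFrobBimod F m η δ ε) := by
  have obj_eq (Z : UCFrobBimod F m η δ ε) :
      (UMod.toFrobBimod unit₁ unit₂ coassoc counit₂ frob₁ frob₂).obj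
        ((forgetToUMod F m η δ ε).obj Z) = Z :=
    UCFrobBimod.ext rfl HEq.rfl (heq_of_eq Z.coaction_forgetToUMod)
  refine CategoryTheory.Functor.ext obj_eq fun Z W f => Subtype.ext ?_
  rw [UCFrobBimod.comp_val, UCFrobBimod.comp_val, UCFrobBimod.eqToHom_val,
    UCFrobBimod.eqToHom_val]
  -- the carriers agree definitionally, so both `eqToHom`s reduce to identities
  exact (Category.comp_id _).symm.trans (Category.id_comp _).symm

theorem forgetToCComod_comp_toFrobBimod
    (massoc : ∀ X : B, F.map (m.app X) ≫ m.app X = m.app (F.obj X) ≫ m.app X)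
    (unit₂ : ∀ X : B, η.app (F.obj X) ≫ m.app X = 𝟙 (F.obj X))
    (counit₁ : ∀ X : B, δ.app X ≫ F.map (ε.app X) = 𝟙 (F.obj X))
    (counit₂ : ∀ X : B, δ.app X ≫ ε.app (F.obj X) = 𝟙 (F.obj X))
    (frob₁ : ∀ X : B, m.app X ≫ δ.app X = δ.app (F.obj X) ≫ F.map (m.app X))
    (frob₂ : ∀ X : B, m.app X ≫ δ.app X = F.map (δ.app X) ≫ m.app (F.obj X)) :
    forgetToCComod F m η δ ε ⋙ CComod.toFrobBimod massoc unit₂ counit₁ counit₂ frob₁ frob₂ =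
      𝟭 (UCFrobBimod F m η δ ε) := by
  have obj_eq (Z : UCFrobBimod F m η δ ε) :
      (CComod.toFrobBimod massoc unit₂ counit₁ counit₂ frob₁ frob₂).obj
        ((forgetToCComod F m η δ ε).obj Z) = Z :=
    UCFrobBimod.ext rfl (heq_of_eq Z.action_forgetToCComod) HEq.rfl
  refine CategoryTheory.Functor.ext obj_eq fun Z W f => Subtype.ext ?_
  rw [UCFrobBimod.comp_val, UCFrobBimod.comp_val, UCFrobBimod.eqToHom_val,
    UCFrobBimod.eqToHom_val]
  exact (Category.comp_id _).symm.trans (Category.id_comp _).symm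

end Bimodule

/-- For a (proper) Frobenius monad `(F, m, η; δ, ε)`, the
categories of unital `F`-modules, counital `F`-comodules, and unital-and-counital
Frobenius `F`-bimodules are pairwise isomorphic via
`(B,ϱ) ↦ (B, ϱ, F(ϱ)·δ·η)` and `(B,ω) ↦ (B, ε·m·F(ω), ω)`, with the forgetful
functors as inverses. -/
theorem frobenius_monad_module_comodule_bimodule_iso
    (F : B ⥤ B) (m : F ⋙ F ⟶ F) (η : 𝟭 B ⟶ F) (δ : F ⟶ F ⋙ F) (ε : F ⟶ 𝟭 B)
    -- monad
    (massoc : ∀ X : B, F.map (m.app X) ≫ m.app X = m.app (F.obj X) ≫ m.app X)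
    (unit₁ : ∀ X : B, F.map (η.app X) ≫ m.app X = 𝟙 (F.obj X))
    (unit₂ : ∀ X : B, η.app (F.obj X) ≫ m.app X = 𝟙 (F.obj X))
    -- comonad
    (coassoc : ∀ X : B, δ.app X ≫ F.map (δ.app X) = δ.app X ≫ δ.app (F.obj X))
    (counit₁ : ∀ X : B, δ.app X ≫ F.map (ε.app X) = 𝟙 (F.obj X))
    (counit₂ : ∀ X : B, δ.app X ≫ ε.app (F.obj X) = 𝟙 (F.obj X))
    -- Frobenius property
    (frob₁ : ∀ X : B, m.app X ≫ δ.app X = δ.app (F.obj X) ≫ F.map (m.app X))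
    (frob₂ : ∀ X : B, m.app X ≫ δ.app X = F.map (δ.app X) ≫ m.app (F.obj X)) :
    -- each unital module gives a unital-and-counital Frobenius bimodule
    (∀ X : UMod F m η,
      ((η.app X.pt ≫ δ.app X.pt ≫ F.map X.act) ≫ F.map (η.app X.pt ≫ δ.app X.pt ≫ F.map X.act)
          = (η.app X.pt ≫ δ.app X.pt ≫ F.map X.act) ≫ δ.app X.pt) ∧
      ((η.app X.pt ≫ δ.app X.pt ≫ F.map X.act) ≫ ε.app X.pt = 𝟙 X.pt) ∧
      (δ.app X.pt ≫ F.map X.act = X.act ≫ (η.app X.pt ≫ δ.app X.pt ≫ F.map X.act)) ∧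
      (F.map (η.app X.pt ≫ δ.app X.pt ≫ F.map X.act) ≫ m.app X.pt
          = X.act ≫ (η.app X.pt ≫ δ.app X.pt ≫ F.map X.act))) ∧
    -- each counital comodule gives a unital-and-counital Frobenius bimodule
    (∀ Y : CComod F δ ε,
      (F.map (F.map Y.co ≫ m.app Y.pt ≫ ε.app Y.pt) ≫ (F.map Y.co ≫ m.app Y.pt ≫ ε.app Y.pt)
          = m.app Y.pt ≫ (F.map Y.co ≫ m.app Y.pt ≫ ε.app Y.pt)) ∧
      (η.app Y.pt ≫ F.map Y.co ≫ m.app Y.pt ≫ ε.app Y.pt = 𝟙 Y.pt) ∧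
      (δ.app Y.pt ≫ F.map (F.map Y.co ≫ m.app Y.pt ≫ ε.app Y.pt)
          = (F.map Y.co ≫ m.app Y.pt ≫ ε.app Y.pt) ≫ Y.co) ∧
      (F.map Y.co ≫ m.app Y.pt = (F.map Y.co ≫ m.app Y.pt ≫ ε.app Y.pt) ≫ Y.co)) ∧
    -- the categories are isomorphic, with the forgetful functors as inverses
    (∃ Φ : UMod F m η ⥤ UCFrobBimod F m η δ ε,
      Φ ⋙ forgetToUMod F m η δ ε = 𝟭 (UMod F m η) ∧
      forgetToUMod F m η δ ε ⋙ Φ = 𝟭 (UCFrobBimod F m η δ ε) ∧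
      ∀ X : UMod F m η,
        (forgetToUMod F m η δ ε).obj (Φ.obj X) = X ∧
        HEq (Φ.obj X).co (η.app X.pt ≫ δ.app X.pt ≫ F.map X.act)) ∧
    (∃ Ψ : CComod F δ ε ⥤ UCFrobBimod F m η δ ε,
      Ψ ⋙ forgetToCComod F m η δ ε = 𝟭 (CComod F δ ε) ∧
      forgetToCComod F m η δ ε ⋙ Ψ = 𝟭 (UCFrobBimod F m η δ ε) ∧
      ∀ Y : CComod F δ ε,
        (forgetToCComod F m η δ ε).obj (Ψ.obj Y) = Y ∧
        HEq (Ψ.obj Y).act (F.map Y.co ≫ m.app Y.pt ≫ ε.app Y.pt)) := by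
  refine ⟨fun X => ⟨X.coaction_coassoc unit₂ coassoc frob₁, X.coaction_counit counit₂,
      X.frob₁_coaction unit₂ frob₁, X.frob₂_coaction unit₁ unit₂ frob₁ frob₂⟩,
    fun Y => ⟨Y.action_assoc massoc counit₂ frob₂, Y.action_unit unit₂,
      Y.frob₁_action counit₁ counit₂ frob₁ frob₂, Y.frob₂_action counit₂ frob₂⟩,
    ⟨UMod.toFrobBimod unit₁ unit₂ coassoc counit₂ frob₁ frob₂, rfl,
      forgetToUMod_comp_toFrobBimod unit₁ unit₂ coassoc counit₂ frob₁ frob₂,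
      fun _ => ⟨rfl, HEq.rfl⟩⟩,
    ⟨CComod.toFrobBimod massoc unit₂ counit₁ counit₂ frob₁ frob₂, rfl,
      forgetToCComod_comp_toFrobBimod massoc unit₂ counit₁ counit₂ frob₁ frob₂,
      fun _ => ⟨rfl, HEq.rfl⟩⟩⟩

end
end
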